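/- arXiv:1510.01073 — 13 statements merged into one kernel-verified Lean document; each statement's English description precedes it below -/
import Mathlib

section
/- The Jacobi–Davidson correction equation (I - u u^H)(A - λ̃ I)(I - u u^H) v = -r, subject to the constraint u^H v = 0, has exactly one solution v if and only if u^H (A - λ̃ I)^{-1} u ≠ 0. -/
/-!
On the hyperplane `uᴴ v = 0` the right-hand projector acts trivially, so with `B = A - λ̃ I`
the equation reads `B v - (uᴴ B v) u = -B u`, i.e. `v = c B⁻¹ u - u` with `c = uᴴ B v`.
The constraint then forces `c α = 1` for `α = uᴴ B⁻¹ u`; conversely, since `uᴴ B u = 0`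
(`λ̃` is the Rayleigh quotient), every such `c` gives a solution. So the solution set is
`{α⁻¹ B⁻¹ u - u}` when `α ≠ 0` and empty when `α = 0`.
-/

open Matrix

namespace Matrix

lemma eq_smul_one_of_fin_one {K : Type*} [Semiring K] (M : Matrix (Fin 1) (Fin 1) K) :
    M = M 0 0 • (1 : Matrix (Fin 1) (Fin 1) K) := by
  ext i j
  fin_cases i; fin_cases j
  simp

section Projector

variable {K m : Type*} [CommRing K] [Fintype m] {u : Matrix m (Fin 1) K}
  {y : Matrix (Fin 1) m K}

lemma mul_smul_sub_eq_zero_iff (hyu : y * u = 1) (w : Matrix m (Fin 1) K) (c : K) :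
    y * (c • w - u) = 0 ↔ c * (y * w) 0 0 = 1 := by
  rw [Matrix.mul_sub, Matrix.mul_smul, hyu, sub_eq_zero]
  nth_rw 1 [eq_smul_one_of_fin_one (y * w)]
  rw [smul_smul]
  exact ⟨fun h => by simpa using congrFun (congrFun h 0) 0, fun h => by rw [h, one_smul]⟩

variable [DecidableEq m] {B : Matrix m m K}

lemma one_sub_mul_mul_of_mul_eq_zero {x : Matrix m (Fin 1) K} (hx : y * x = 0) :
    (1 - u * y) * x = x := by
  rw [Matrix.sub_mul, Matrix.one_mul, Matrix.mul_assoc, hx, Matrix.mul_zero, sub_zero]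

lemma eq_smul_inv_mul_sub_of_correction (hB : IsUnit B.det) {v : Matrix m (Fin 1) K}
    (hv : y * v = 0) (hcorr : (1 - u * y) * B * (1 - u * y) * v = -(B * u)) :
    v = (y * B * v) 0 0 • (B⁻¹ * u) - u := by
  rw [Matrix.mul_assoc _ _ v, one_sub_mul_mul_of_mul_eq_zero hv, Matrix.mul_assoc,
    Matrix.sub_mul, Matrix.one_mul, Matrix.mul_assoc u, ← Matrix.mul_assoc y,
    eq_smul_one_of_fin_one (y * B * v), Matrix.mul_smul, Matrix.mul_one] at hcorr
  have hBv : B * v = (y * B * v) 0 0 • u - B * u := by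
    linear_combination (norm := abel) hcorr
  calc v = B⁻¹ * (B * v) := (nonsing_inv_mul_cancel_left B v hB).symm
    _ = _ := by
      rw [hBv, Matrix.mul_sub, Matrix.mul_smul, nonsing_inv_mul_cancel_left B u hB]

lemma correction_smul_inv_mul_sub (hB : IsUnit B.det) (hyu : y * u = 1)
    (hyBu : y * B * u = 0) {c : K} (hc : c * (y * B⁻¹ * u) 0 0 = 1) :
    y * (c • (B⁻¹ * u) - u) = 0 ∧
      (1 - u * y) * B * (1 - u * y) * (c • (B⁻¹ * u) - u) = -(B * u) := by
  have hyv : y * (c • (B⁻¹ * u) - u) = 0 := by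
    rwa [mul_smul_sub_eq_zero_iff hyu, ← Matrix.mul_assoc]
  have hPu : (1 - u * y) * u = 0 := by
    rw [Matrix.sub_mul, Matrix.one_mul, Matrix.mul_assoc, hyu, Matrix.mul_one, sub_self]
  refine ⟨hyv, ?_⟩
  rw [Matrix.mul_assoc _ _ (c • _ - u), one_sub_mul_mul_of_mul_eq_zero hyv, Matrix.mul_sub,
    Matrix.mul_smul, Matrix.mul_assoc _ B, mul_nonsing_inv_cancel_left B u hB, hPu, smul_zero,
    zero_sub, Matrix.mul_assoc, Matrix.sub_mul, Matrix.one_mul, Matrix.mul_assoc u,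
    ← Matrix.mul_assoc y, hyBu, Matrix.mul_zero, sub_zero]

end Projector

theorem correction_iff_eq_inv_smul_sub {K m : Type*} [Field K] [Fintype m] [DecidableEq m]
    {B : Matrix m m K} {u : Matrix m (Fin 1) K} {y : Matrix (Fin 1) m K}
    (hB : IsUnit B.det) (hyu : y * u = 1) (hyBu : y * B * u = 0) (v : Matrix m (Fin 1) K) :
    (y * v = 0 ∧ (1 - u * y) * B * (1 - u * y) * v = -(B * u)) ↔
      (y * B⁻¹ * u) 0 0 ≠ 0 ∧ v = ((y * B⁻¹ * u) 0 0)⁻¹ • (B⁻¹ * u) - u := by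
  constructor
  · rintro ⟨hv, hcorr⟩
    have hform := eq_smul_inv_mul_sub_of_correction hB hv hcorr
    have hc : (y * B * v) 0 0 * (y * B⁻¹ * u) 0 0 = 1 := by
      rw [Matrix.mul_assoc y B⁻¹ u, ← mul_smul_sub_eq_zero_iff hyu, ← hform, hv]
    rw [eq_inv_of_mul_eq_one_left hc] at hform
    exact ⟨right_ne_zero_of_mul_eq_one hc, hform⟩
  · rintro ⟨hα, rfl⟩
    exact correction_smul_inv_mul_sub hB hyu hyBu (inv_mul_cancel₀ hα)

end Matrix

/-- The Jacobi–Davidson correction equation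
`(I - u uᴴ)(A - λ̃ I)(I - u uᴴ) v = -r`, subject to `uᴴ v = 0`,
has exactly one solution `v` iff `uᴴ (A - λ̃ I)⁻¹ u ≠ 0`. -/
theorem jd_correction_unique_solution_iff
    {n : ℕ} (A : Matrix (Fin n) (Fin n) ℂ) (lam : ℂ)
    (hA : IsUnit (A - lam • (1 : Matrix (Fin n) (Fin n) ℂ)))
    (u : Matrix (Fin n) (Fin 1) ℂ)
    (hu : uᴴ * u = 1)
    (hlam : (uᴴ * A * u) 0 0 = lam)
    (r : Matrix (Fin n) (Fin 1) ℂ)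
    (hr : r = (A - lam • 1) * u) :
    (∃! v : Matrix (Fin n) (Fin 1) ℂ,
        uᴴ * v = 0 ∧
          (1 - u * uᴴ) * (A - lam • 1) * (1 - u * uᴴ) * v = -r) ↔
      (uᴴ * (A - lam • (1 : Matrix (Fin n) (Fin n) ℂ))⁻¹ * u) 0 0 ≠ 0 := by
  have hRayleigh : uᴴ * (A - lam • 1) * u = 0 := by
    rw [Matrix.mul_sub, Matrix.sub_mul, Matrix.mul_smul, Matrix.mul_one, Matrix.smul_mul, hu,
      eq_smul_one_of_fin_one (uᴴ * A * u), hlam, sub_self]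
  subst hr
  simp_rw [correction_iff_eq_inv_smul_sub ((isUnit_iff_isUnit_det _).mp hA) hu hRayleigh]
  exact ⟨fun ⟨_, ⟨hα, _⟩, _⟩ => hα, fun hα => ⟨_, ⟨hα, rfl⟩, fun _ hv => hv.2⟩⟩
end

section
/- The Jacobi–Davidson correction equation (I - u u^H)(A - λ̃ I)(I - u u^H) v = -r, subject to the constraint u^H v = 0, has no solution v if and only if u^H (A - λ̃ I)^{-1} u = 0. -/
/-!
Write `B = A - λ̃ I` and `P = I - u uᴴ`. A vector `v ⊥ u` is fixed by `P`, and `P` kills exactly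
the multiples of `u` while fixing `r ⊥ u`; so the correction equation says `B v = -r + c u` for
some scalar `c`, i.e. `v = -u + c B⁻¹ u` because `B⁻¹ r = u`. The constraint `uᴴ v = 0` then
reads `c · uᴴ B⁻¹ u = 1`, which is solvable iff `uᴴ B⁻¹ u ≠ 0`.
-/

open Matrix

namespace Matrix

theorem fin_one_ext_iff {α : Type*} {M N : Matrix (Fin 1) (Fin 1) α} :
    M = N ↔ M 0 0 = N 0 0 := by
  simp [← Matrix.ext_iff, Fin.forall_fin_one]

theorem mul_fin_one_eq_smul {R m : Type*} [CommSemiring R] (u : Matrix m (Fin 1) R)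
    (M : Matrix (Fin 1) (Fin 1) R) : u * M = M 0 0 • u := by
  ext i j
  fin_cases j
  simp [mul_apply, _root_.mul_comm (u _ _)]

section Projection

variable {R n : Type*} [CommRing R] [Fintype n] [DecidableEq n]
  {u x y : Matrix n (Fin 1) R} {w : Matrix (Fin 1) n R}

theorem one_sub_mul_mul_of_mul_eq_zero_s1 (h : w * x = 0) : (1 - u * w) * x = x := by
  rw [Matrix.sub_mul, Matrix.one_mul, Matrix.mul_assoc, h, Matrix.mul_zero, sub_zero]

theorem one_sub_mul_mul_eq_iff (hwu : w * u = 1) (hwy : w * y = 0) :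
    (1 - u * w) * x = y ↔ ∃ c : R, x = y + c • u := by
  rw [Matrix.sub_mul, Matrix.one_mul, Matrix.mul_assoc, mul_fin_one_eq_smul, sub_eq_iff_eq_add]
  refine ⟨fun h => ⟨_, h⟩, ?_⟩
  rintro ⟨c, rfl⟩
  simp [Matrix.mul_add, hwy, hwu]

theorem mul_sub_smul_one_mul_eq_zero (A : Matrix n n R) (hwu : w * u = 1) :
    w * ((A - (w * A * u) 0 0 • 1) * u) = 0 := by
  rw [Matrix.sub_mul, Matrix.mul_sub, Matrix.smul_mul, Matrix.one_mul, Matrix.mul_smul, hwu,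
    ← Matrix.mul_assoc, fin_one_ext_iff]
  simp

end Projection

end Matrix

section Correction

variable {K n : Type*} [Field K] [Fintype n] [DecidableEq n] {B : Matrix n n K} [Invertible B]
  {u v : Matrix n (Fin 1) K} {w : Matrix (Fin 1) n K}

theorem jd_correction_solution_iff (hwu : w * u = 1) (hwr : w * (B * u) = 0) :
    (w * v = 0 ∧ (1 - u * w) * B * (1 - u * w) * v = -(B * u)) ↔
      (w * B⁻¹ * u) 0 0 ≠ 0 ∧ v = -u + ((w * B⁻¹ * u) 0 0)⁻¹ • (B⁻¹ * u) := by
  have hBv (c : K) : B * v = -(B * u) + c • u ↔ v = -u + c • (B⁻¹ * u) := by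
    rw [eq_comm, ← inv_mul_eq_iff_eq_mul_of_invertible, Matrix.mul_add, Matrix.mul_neg,
      inv_mul_cancel_left_of_invertible, Matrix.mul_smul, eq_comm]
  have hwv (c : K) : w * (-u + c • (B⁻¹ * u)) = 0 ↔ c * (w * B⁻¹ * u) 0 0 = 1 := by
    rw [Matrix.mul_add, Matrix.mul_neg, hwu, Matrix.mul_smul, ← Matrix.mul_assoc,
      neg_add_eq_zero, fin_one_ext_iff]
    simp [eq_comm]
  have hwr' : w * -(B * u) = 0 := by rw [Matrix.mul_neg, hwr, neg_zero]
  constructor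
  · rintro ⟨hv₀, hv⟩
    rw [Matrix.mul_assoc _ _ v, one_sub_mul_mul_of_mul_eq_zero_s1 hv₀, Matrix.mul_assoc,
      one_sub_mul_mul_eq_iff hwu hwr'] at hv
    obtain ⟨c, rfl⟩ : ∃ c : K, v = -u + c • (B⁻¹ * u) := hv.imp fun c => (hBv c).mp
    have hcs := (hwv c).mp hv₀
    rw [eq_inv_of_mul_eq_one_left hcs]
    exact ⟨right_ne_zero_of_mul_eq_one hcs, rfl⟩
  · rintro ⟨hs, rfl⟩
    have hv₀ := (hwv _).mpr (inv_mul_cancel₀ hs)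
    refine ⟨hv₀, ?_⟩
    rw [Matrix.mul_assoc _ _ (-u + _), one_sub_mul_mul_of_mul_eq_zero_s1 hv₀, Matrix.mul_assoc,
      one_sub_mul_mul_eq_iff hwu hwr']
    exact ⟨_, (hBv _).mpr rfl⟩

end Correction

/-- The Jacobi–Davidson correction equation
`(I - u uᴴ)(A - λ̃ I)(I - u uᴴ) v = -r`, subject to `uᴴ v = 0`,
has no solution `v` iff `uᴴ (A - λ̃ I)⁻¹ u = 0`. -/
theorem jd_correction_no_solution_iff
    {n : ℕ} (A : Matrix (Fin n) (Fin n) ℂ) (lam : ℂ)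
    (hA : IsUnit (A - lam • (1 : Matrix (Fin n) (Fin n) ℂ)))
    (u : Matrix (Fin n) (Fin 1) ℂ)
    (hu : uᴴ * u = 1)
    (hlam : (uᴴ * A * u) 0 0 = lam)
    (r : Matrix (Fin n) (Fin 1) ℂ)
    (hr : r = (A - lam • 1) * u) :
    (¬ ∃ v : Matrix (Fin n) (Fin 1) ℂ,
        uᴴ * v = 0 ∧
          (1 - u * uᴴ) * (A - lam • 1) * (1 - u * uᴴ) * v = -r) ↔
      (uᴴ * (A - lam • (1 : Matrix (Fin n) (Fin n) ℂ))⁻¹ * u) 0 0 = 0 := by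
  have := hA.invertible
  have hur : uᴴ * ((A - lam • 1) * u) = 0 := hlam ▸ mul_sub_smul_one_mul_eq_zero A hu
  subst hr
  simp only [jd_correction_solution_iff hu hur, exists_and_left, exists_eq, and_true, not_not]
end

section
/- The alternative correction equation (I - W W^H)(A - λ̃ I)(I - W W^H) v = -r, subject to the constraint W^H v = 0, has exactly one solution v if and only if the m×m matrix W^H (A - λ̃ I)^{-1} W is invertible. -/
/-!
The argument works with `Wᴴ` replaced by any left inverse `L` of `W` and `I - W Wᴴ` by the
oblique projector `P = 1 - W L`. Put `B = A - λ̃ I`. If `L v = 0` and `L r = 0` then `P v = v` and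
`P r = r`, so the equation reads `P (B v + r) = 0`, i.e. `B v + r = W t` for some `t`. Hence the
solutions are `v = B⁻¹ (W t - r)` with `L B⁻¹ W t = L B⁻¹ r`, and `t ↦ B⁻¹ (W t - r)` is injective:
`v` is unique iff this square system has exactly one solution, i.e. iff `L B⁻¹ W` is invertible.
-/

open Matrix

theorem Function.Injective.existsUnique_congr {α β : Type*} {p : α → Prop} {q : β → Prop}
    {f : β → α} (hf : Function.Injective f) (h : ∀ a, p a ↔ ∃ b, q b ∧ a = f b) :
    (∃! a, p a) ↔ ∃! b, q b := by
  constructor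
  · rintro ⟨a, ha, huniq⟩
    obtain ⟨b, hb, rfl⟩ := (h a).1 ha
    exact ⟨b, hb, fun b' hb' => hf (huniq _ ((h _).2 ⟨b', hb', rfl⟩))⟩
  · rintro ⟨b, hb, huniq⟩
    refine ⟨f b, (h _).2 ⟨b, hb, rfl⟩, fun a ha => ?_⟩
    obtain ⟨b', hb', rfl⟩ := (h a).1 ha
    rw [huniq b' hb']

namespace Matrix

section Projector

variable {R : Type*} [Ring R] {n m ι : Type*} [Fintype n] [DecidableEq n] [Fintype m]
  {W : Matrix n m R} {L : Matrix m n R}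

theorem one_sub_mul_mul_eq_self_of_mul_eq_zero {x : Matrix n ι R} (hx : L * x = 0) :
    (1 - W * L) * x = x := by
  rw [Matrix.sub_mul, Matrix.one_mul, Matrix.mul_assoc, hx, Matrix.mul_zero, sub_zero]

variable [DecidableEq m]

theorem one_sub_mul_mul_eq_zero_iff (hLW : L * W = 1) (x : Matrix n ι R) :
    (1 - W * L) * x = 0 ↔ ∃ t : Matrix m ι R, x = W * t := by
  constructor
  · intro hx
    exact ⟨L * x, by rwa [Matrix.sub_mul, Matrix.one_mul, sub_eq_zero, Matrix.mul_assoc] at hx⟩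
  · rintro ⟨t, rfl⟩
    rw [Matrix.sub_mul, Matrix.one_mul, Matrix.mul_assoc, ← Matrix.mul_assoc L, hLW,
      Matrix.one_mul, sub_self]

theorem projected_mul_eq_neg_iff (hLW : L * W = 1) (B : Matrix n n R) {v r : Matrix n ι R}
    (hv : L * v = 0) (hr : L * r = 0) :
    (1 - W * L) * B * (1 - W * L) * v = -r ↔ ∃ t : Matrix m ι R, B * v + r = W * t := by
  have hsplit : (1 - W * L) * B * (1 - W * L) * v + r = (1 - W * L) * (B * v + r) := by
    rw [Matrix.mul_add, one_sub_mul_mul_eq_self_of_mul_eq_zero hr, Matrix.mul_assoc _ (1 - W * L),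
      one_sub_mul_mul_eq_self_of_mul_eq_zero hv, Matrix.mul_assoc]
  rw [eq_neg_iff_add_eq_zero, hsplit, one_sub_mul_mul_eq_zero_iff hLW]

end Projector

section Correction

variable {R : Type*} [CommRing R] {n m ι : Type*} [Fintype n] [DecidableEq n] [Fintype m]
  [DecidableEq m] {W : Matrix n m R} {L : Matrix m n R} {B : Matrix n n R}

theorem injective_nonsing_inv_mul_mul_sub (hLW : L * W = 1) (hB : IsUnit B) (r : Matrix n ι R) :
    Function.Injective fun t : Matrix m ι R => B⁻¹ * (W * t - r) := by
  intro t t' h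
  have hdet := (isUnit_iff_isUnit_det B).mp hB
  simpa [mul_nonsing_inv_cancel_left _ _ hdet, ← Matrix.mul_assoc, hLW] using
    congrArg (fun v => L * (B * v + r)) h

theorem correction_solution_iff (hLW : L * W = 1) (hB : IsUnit B) {r : Matrix n ι R}
    (hr : L * r = 0) (v : Matrix n ι R) :
    (L * v = 0 ∧ (1 - W * L) * B * (1 - W * L) * v = -r) ↔
      ∃ t : Matrix m ι R, L * B⁻¹ * W * t = L * B⁻¹ * r ∧ v = B⁻¹ * (W * t - r) := by
  have hdet := (isUnit_iff_isUnit_det B).mp hB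
  have hv_iff (t : Matrix m ι R) : v = B⁻¹ * (W * t - r) ↔ B * v + r = W * t := by
    rw [← eq_sub_iff_add_eq]
    constructor
    · rintro rfl
      exact mul_nonsing_inv_cancel_left _ _ hdet
    · intro h
      rw [← h, nonsing_inv_mul_cancel_left _ _ hdet]
  have hLv_iff (t : Matrix m ι R) (hvt : v = B⁻¹ * (W * t - r)) :
      L * v = 0 ↔ L * B⁻¹ * W * t = L * B⁻¹ * r := by
    simp only [hvt, Matrix.mul_sub, sub_eq_zero, Matrix.mul_assoc]
  constructor
  · rintro ⟨hv, heq⟩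
    obtain ⟨t, ht⟩ := (projected_mul_eq_neg_iff hLW B hv hr).1 heq
    have hvt := (hv_iff t).2 ht
    exact ⟨t, (hLv_iff t hvt).1 hv, hvt⟩
  · rintro ⟨t, ht, hvt⟩
    have hv := (hLv_iff t hvt).2 ht
    exact ⟨hv, (projected_mul_eq_neg_iff hLW B hv hr).2 ⟨t, (hv_iff t).1 hvt⟩⟩

end Correction

theorem existsUnique_mul_eq_iff_isUnit {K : Type*} [Field K] {m ι : Type*} [Fintype m]
    [DecidableEq m] [Nonempty ι] (S : Matrix m m K) (c : Matrix m ι K) :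
    (∃! t : Matrix m ι K, S * t = c) ↔ IsUnit S := by
  constructor
  · rintro ⟨t, rfl, huniq⟩
    refine mulVec_injective_iff_isUnit.mp fun x y hxy => ?_
    have hcol : replicateCol ι x = replicateCol ι y := by
      have := huniq (t + replicateCol ι x - replicateCol ι y) (by
        change S * _ = S * t
        rw [Matrix.mul_sub, Matrix.mul_add, ← replicateCol_mulVec, ← replicateCol_mulVec, hxy,
          add_sub_cancel_right])
      rwa [add_sub_assoc, add_eq_left, sub_eq_zero] at this
    funext i
    exact congrFun (congrFun hcol i) (Classical.arbitrary ι)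
  · intro hS
    have hdet := (isUnit_iff_isUnit_det S).mp hS
    exact ⟨S⁻¹ * c, mul_nonsing_inv_cancel_left _ _ hdet,
      fun t ht => by rw [← ht, nonsing_inv_mul_cancel_left _ _ hdet]⟩

end Matrix

theorem alt_correction_unique_solution_iff_general
    {n m : ℕ}
    (A : Matrix (Fin n) (Fin n) ℂ) (lam : ℂ)
    (hA : IsUnit (A - lam • (1 : Matrix (Fin n) (Fin n) ℂ)))
    (W : Matrix (Fin n) (Fin m) ℂ) (hW : Wᴴ * W = 1)
    (r : Matrix (Fin n) (Fin 1) ℂ)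
    (hWr : Wᴴ * r = 0) :
    (∃! v : Matrix (Fin n) (Fin 1) ℂ,
        Wᴴ * v = 0 ∧
          (1 - W * Wᴴ) * (A - lam • 1) * (1 - W * Wᴴ) * v = -r) ↔
      IsUnit (Wᴴ * (A - lam • (1 : Matrix (Fin n) (Fin n) ℂ))⁻¹ * W) := by
  rw [← existsUnique_mul_eq_iff_isUnit _ (Wᴴ * (A - lam • 1)⁻¹ * r)]
  exact (injective_nonsing_inv_mul_mul_sub hW hA r).existsUnique_congr
    (correction_solution_iff hW hA hWr)

/-- The alternative correction equation
`(I - W Wᴴ)(A - λ̃ I)(I - W Wᴴ) v = -r`, subject to `Wᴴ v = 0`,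
has exactly one solution `v` iff `Wᴴ (A - λ̃ I)⁻¹ W` is invertible. -/
theorem alt_correction_unique_solution_iff
    {n m : ℕ} (hm : m ≤ n)
    (A : Matrix (Fin n) (Fin n) ℂ) (lam : ℂ)
    (hA : IsUnit (A - lam • (1 : Matrix (Fin n) (Fin n) ℂ)))
    (W : Matrix (Fin n) (Fin m) ℂ) (hW : Wᴴ * W = 1)
    (u : Matrix (Fin n) (Fin 1) ℂ)
    (huW : ∃ c : Matrix (Fin m) (Fin 1) ℂ, u = W * c)
    (hu : uᴴ * u = 1)
    (hlam : (uᴴ * A * u) 0 0 = lam)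
    (r : Matrix (Fin n) (Fin 1) ℂ)
    (hr : r = (A - lam • 1) * u)
    (hWr : Wᴴ * r = 0) :
    (∃! v : Matrix (Fin n) (Fin 1) ℂ,
        Wᴴ * v = 0 ∧
          (1 - W * Wᴴ) * (A - lam • 1) * (1 - W * Wᴴ) * v = -r) ↔
      IsUnit (Wᴴ * (A - lam • (1 : Matrix (Fin n) (Fin n) ℂ))⁻¹ * W) :=
  alt_correction_unique_solution_iff_general A lam hA W hW r hWr
end

section
/- The alternative correction equation (I - W W^H)(A - λ̃ I)(I - W W^H) v = -r, subject to the constraint W^H v = 0, has infinitely many solutions v (equivalently, at least two solutions) if and only if the m×m matrix M = W^H (A - λ̃ I)^{-1} W is singular and the vector z = W^H u lies in the column space (range) of M. -/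
/-!
Write `B = A - λ̃ I` and `P = I - W Wᴴ`. On vectors with `Wᴴ v = 0` we have
`P B P v = B v - W (Wᴴ B v)`, so, because `Wᴴ B u = Wᴴ r = 0`, the correction equation says
exactly that `B (v + u) = W s` for some `s`, i.e. `v = -u + B⁻¹ W s`; the constraint `Wᴴ v = 0`
then becomes `M s = Wᴴ u`. The map `s ↦ -u + B⁻¹ W s` is injective, so the solutions `v`
correspond bijectively to the solutions of `M s = Wᴴ u`, an affine space over `ker M` in `ℂᵐ`:
it is infinite iff it is nonempty and `ker M ≠ 0`.
-/

open Matrix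

theorem LinearMap.infinite_preimage_singleton_iff {K V W : Type*} [DivisionRing K] [Infinite K]
    [AddCommGroup V] [Module K V] [AddCommGroup W] [Module K W] (f : V →ₗ[K] W) (z : W) :
    (f ⁻¹' {z}).Infinite ↔ ¬ Function.Injective f ∧ z ∈ Set.range f := by
  refine ⟨fun hinf => ⟨fun hf => hinf ((Set.subsingleton_singleton.preimage hf).finite), ?_⟩, ?_⟩
  · obtain ⟨x, hx⟩ := hinf.nonempty
    exact ⟨x, hx⟩
  · rintro ⟨hf, x₀, rfl⟩
    obtain ⟨x, hx, hx0⟩ : ∃ x ∈ LinearMap.ker f, x ≠ 0 :=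
      Submodule.exists_mem_ne_zero_of_ne_bot (mt LinearMap.ker_eq_bot.mp hf)
    refine Set.infinite_of_injective_forall_mem (f := fun t : K => x₀ + t • x)
      ((add_right_injective x₀).comp (smul_left_injective K hx0)) fun t => ?_
    simp [LinearMap.mem_ker.mp hx]

namespace Matrix

variable {K m n p : Type*} [Fintype m] [Fintype n]

section SquareSystem

variable [DecidableEq m] [Field K] [Nonempty p]

theorem mul_left_injective_iff_isUnit {M : Matrix m m K} :
    Function.Injective (fun s : Matrix m p K => M * s) ↔ IsUnit M := by
  refine ⟨fun h => mulVec_injective_iff_isUnit.mp fun x y hxy => ?_, fun h s t hst => ?_⟩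
  · apply replicateCol_injective (ι := p)
    apply h
    simp only [← replicateCol_mulVec, hxy]
  · simpa [← Matrix.mul_assoc, Matrix.nonsing_inv_mul _ ((isUnit_iff_isUnit_det M).mp h)] using
      congrArg (M⁻¹ * ·) hst

theorem setOf_mul_eq_infinite_iff [Infinite K] (M : Matrix m m K)
    (z : Matrix m p K) :
    {s | M * s = z}.Infinite ↔ ¬ IsUnit M ∧ ∃ c, z = M * c := by
  rw [← mul_left_injective_iff_isUnit (p := p)]
  exact ((mulLeftLinearMap p K M).infinite_preimage_singleton_iff z).trans
    (and_congr Iff.rfl (exists_congr fun _ => eq_comm))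

end SquareSystem

section Correction

variable [DecidableEq n] [CommRing K] {B : Matrix n n K} {W : Matrix n m K} {V : Matrix m n K}

theorem one_sub_mul_mul_one_sub_mul_of_mul_eq_zero {v : Matrix n p K} (hv : V * v = 0) :
    (1 - W * V) * B * (1 - W * V) * v = B * v - W * (V * (B * v)) := by
  have hPv : (1 - W * V) * v = v := by
    rw [Matrix.sub_mul, Matrix.one_mul, Matrix.mul_assoc, hv, Matrix.mul_zero, sub_zero]
  rw [Matrix.mul_assoc, hPv, Matrix.mul_assoc, Matrix.sub_mul, Matrix.one_mul, Matrix.mul_assoc]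

theorem setOf_correction_eq_image [DecidableEq m] (hB : IsUnit B) (hVW : V * W = 1)
    (u : Matrix n p K) (hVBu : V * (B * u) = 0) :
    {v : Matrix n p K | V * v = 0 ∧ (1 - W * V) * B * (1 - W * V) * v = -(B * u)} =
      (fun s : Matrix m p K => -u + B⁻¹ * (W * s)) '' {s | V * B⁻¹ * W * s = V * u} := by
  have hBdet := (isUnit_iff_isUnit_det B).mp hB
  ext v
  simp only [Set.mem_ofPred_eq, Set.mem_image]
  constructor
  · rintro ⟨hv, heq⟩
    rw [one_sub_mul_mul_one_sub_mul_of_mul_eq_zero hv] at heq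
    set s := V * (B * v)
    have hWs : W * s = B * (v + u) := by
      rw [Matrix.mul_add, ← neg_neg (B * u), ← heq]
      abel
    have hvu : B⁻¹ * (W * s) = v + u := by
      rw [hWs, ← Matrix.mul_assoc, Matrix.nonsing_inv_mul _ hBdet, Matrix.one_mul]
    refine ⟨s, ?_, ?_⟩
    · rw [Matrix.mul_assoc, Matrix.mul_assoc, hvu, Matrix.mul_add, hv, zero_add]
    · rw [hvu]
      abel
  · rintro ⟨s, hs, rfl⟩
    have hv : V * (-u + B⁻¹ * (W * s)) = 0 := by
      rw [Matrix.mul_add, Matrix.mul_neg, ← hs, Matrix.mul_assoc, Matrix.mul_assoc, neg_add_cancel]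
    have hBv : B * (-u + B⁻¹ * (W * s)) = -(B * u) + W * s := by
      rw [Matrix.mul_add, Matrix.mul_neg, ← Matrix.mul_assoc, Matrix.mul_nonsing_inv _ hBdet,
        Matrix.one_mul]
    refine ⟨hv, ?_⟩
    rw [one_sub_mul_mul_one_sub_mul_of_mul_eq_zero hv, hBv, Matrix.mul_add, Matrix.mul_neg,
      hVBu, ← Matrix.mul_assoc V W, hVW, Matrix.one_mul, neg_zero, zero_add, add_sub_cancel_right]

theorem injective_neg_add_inv_mul [DecidableEq m] (hB : IsUnit B) (hVW : V * W = 1)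
    (u : Matrix n p K) :
    Function.Injective fun s : Matrix m p K => -u + B⁻¹ * (W * s) :=
  Function.LeftInverse.injective (g := fun v => V * (B * (v + u))) fun s => by
    simp [← Matrix.mul_assoc, Matrix.mul_nonsing_inv _ ((isUnit_iff_isUnit_det B).mp hB), hVW]

end Correction

end Matrix

theorem alt_correction_infinitely_many_solutions_iff_general
    {n m : ℕ}
    (A : Matrix (Fin n) (Fin n) ℂ) (lam : ℂ)
    (hA : IsUnit (A - lam • (1 : Matrix (Fin n) (Fin n) ℂ)))
    (W : Matrix (Fin n) (Fin m) ℂ) (hW : Wᴴ * W = 1)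
    (u : Matrix (Fin n) (Fin 1) ℂ)
    (r : Matrix (Fin n) (Fin 1) ℂ)
    (hr : r = (A - lam • 1) * u)
    (hWr : Wᴴ * r = 0)
    (M : Matrix (Fin m) (Fin m) ℂ)
    (hM : M = Wᴴ * (A - lam • (1 : Matrix (Fin n) (Fin n) ℂ))⁻¹ * W) :
    ({v : Matrix (Fin n) (Fin 1) ℂ |
        Wᴴ * v = 0 ∧
          (1 - W * Wᴴ) * (A - lam • 1) * (1 - W * Wᴴ) * v = -r}.Infinite) ↔
      (¬ IsUnit M ∧ ∃ c : Matrix (Fin m) (Fin 1) ℂ, Wᴴ * u = M * c) := by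
  subst hr hM
  rw [setOf_correction_eq_image hA hW u hWr,
    Set.infinite_image_iff (injective_neg_add_inv_mul hA hW u).injOn]
  exact setOf_mul_eq_infinite_iff _ _

/-- The alternative correction equation
`(I - W Wᴴ)(A - λ̃ I)(I - W Wᴴ) v = -r`, subject to `Wᴴ v = 0`,
has infinitely many solutions `v` iff `M = Wᴴ (A - λ̃ I)⁻¹ W` is singular and
`z = Wᴴ u` lies in the column space of `M`. -/
theorem alt_correction_infinitely_many_solutions_iff
    {n m : ℕ} (hm : m ≤ n)
    (A : Matrix (Fin n) (Fin n) ℂ) (lam : ℂ)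
    (hA : IsUnit (A - lam • (1 : Matrix (Fin n) (Fin n) ℂ)))
    (W : Matrix (Fin n) (Fin m) ℂ) (hW : Wᴴ * W = 1)
    (u : Matrix (Fin n) (Fin 1) ℂ)
    (huW : ∃ c : Matrix (Fin m) (Fin 1) ℂ, u = W * c)
    (hu : uᴴ * u = 1)
    (hlam : (uᴴ * A * u) 0 0 = lam)
    (r : Matrix (Fin n) (Fin 1) ℂ)
    (hr : r = (A - lam • 1) * u)
    (hWr : Wᴴ * r = 0)
    (M : Matrix (Fin m) (Fin m) ℂ)
    (hM : M = Wᴴ * (A - lam • (1 : Matrix (Fin n) (Fin n) ℂ))⁻¹ * W) :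
    ({v : Matrix (Fin n) (Fin 1) ℂ |
        Wᴴ * v = 0 ∧
          (1 - W * Wᴴ) * (A - lam • 1) * (1 - W * Wᴴ) * v = -r}.Infinite) ↔
      (¬ IsUnit M ∧ ∃ c : Matrix (Fin m) (Fin 1) ℂ, Wᴴ * u = M * c) :=
  alt_correction_infinitely_many_solutions_iff_general A lam hA W hW u r hr hWr M hM
end

section
/- The alternating two-sided Jacobi–Davidson right correction equation (I - (q p^H)/(p^H q))(A - θ I)(I - q q^H) s = -r_q, subject to the constraint q^H s = 0, has exactly one solution s if and only if q^H (A - θ I)^{-1} q ≠ 0; and it has no solution if and only if q^H (A - θ I)^{-1} q = 0. -/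
/-!
Write `B = A - θ I` and `P = I - q pᴴ / (pᴴ q)`. The choice of `θ` gives `pᴴ B q = 0`, so
`P (B q) = B q`, while `ker P = span q`. For `s ⟂ q` the equation reads `P B s = -P B q`, i.e.
`B (s + q) ∈ span q`, i.e. `s = α B⁻¹ q - q`. The constraint `qᴴ s = 0` then forces
`α · qᴴ B⁻¹ q = 1`, which has exactly one solution `α` when `qᴴ B⁻¹ q ≠ 0` and none
otherwise.
-/

open Matrix

theorem Matrix.mul_fin_one_fin_one {ι R : Type*} [CommSemiring R] (u : Matrix ι (Fin 1) R)
    (M : Matrix (Fin 1) (Fin 1) R) : u * M = M 0 0 • u := by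
  ext i j
  fin_cases j
  simp [mul_apply, mul_comm (u _ _)]

theorem Matrix.one_sub_mul_mul_of_mul_eq_zero_s7 {ι R m l : Type*} [Ring R] [Fintype ι]
    [DecidableEq ι] [Fintype m] (a : Matrix ι m R) (b : Matrix m ι R) (x : Matrix ι l R)
    (h : b * x = 0) :
    (1 - a * b) * x = x := by
  rw [Matrix.sub_mul, Matrix.one_mul, Matrix.mul_assoc, h, Matrix.mul_zero, sub_zero]

variable {K ι : Type*} [Field K] [Fintype ι] [DecidableEq ι]

/-- The oblique projector `I - u w / (w u)` onto `ker w` along `u`. -/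
def obliqueProjector (u : Matrix ι (Fin 1) K) (w : Matrix (Fin 1) ι K) : Matrix ι ι K :=
  1 - ((w * u) 0 0)⁻¹ • (u * w)

section ObliqueProjector

variable {u x : Matrix ι (Fin 1) K} {w : Matrix (Fin 1) ι K}

theorem obliqueProjector_eq : obliqueProjector u w = 1 - (((w * u) 0 0)⁻¹ • u) * w := by
  rw [obliqueProjector, Matrix.smul_mul]

theorem obliqueProjector_mul_of_mul_eq_zero (h : w * x = 0) : obliqueProjector u w * x = x := by
  rw [obliqueProjector_eq, one_sub_mul_mul_of_mul_eq_zero_s7 _ _ _ h]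

theorem obliqueProjector_mul_self (h : (w * u) 0 0 ≠ 0) : obliqueProjector u w * u = 0 := by
  rw [obliqueProjector_eq, Matrix.sub_mul, Matrix.one_mul, Matrix.mul_assoc, mul_fin_one_fin_one,
    smul_smul, mul_inv_cancel₀ h, one_smul, sub_self]

theorem obliqueProjector_mul_eq_zero_iff (h : (w * u) 0 0 ≠ 0) :
    obliqueProjector u w * x = 0 ↔ ∃ α : K, x = α • u := by
  constructor
  · intro hx
    rw [obliqueProjector_eq, Matrix.sub_mul, Matrix.one_mul, sub_eq_zero, Matrix.mul_assoc,
      mul_fin_one_fin_one] at hx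
    exact ⟨_, hx.trans (smul_smul _ _ _)⟩
  · rintro ⟨α, rfl⟩
    rw [Matrix.mul_smul, obliqueProjector_mul_self h, smul_zero]

end ObliqueProjector

theorem mul_sub_smul_one_mul_eq_zero_of_eq_div (A : Matrix ι ι K) (q : Matrix ι (Fin 1) K)
    (w : Matrix (Fin 1) ι K) (θ : K) (hwq : (w * q) 0 0 ≠ 0)
    (hθ : θ = (w * A * q) 0 0 / (w * q) 0 0) : w * (A - θ • 1) * q = 0 := by
  ext i j
  rw [Subsingleton.elim i 0, Subsingleton.elim j 0]
  simp only [Matrix.mul_sub, Matrix.sub_mul, Matrix.mul_smul, Matrix.smul_mul, Matrix.mul_one,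
    Matrix.sub_apply, Matrix.smul_apply, smul_eq_mul, hθ, div_mul_cancel₀ _ hwq, sub_self,
    Matrix.zero_apply]

theorem obliqueProjector_mul_mul_eq_neg_iff {B : Matrix ι ι K} (hB : IsUnit B)
    {q s : Matrix ι (Fin 1) K} {w : Matrix (Fin 1) ι K} (hwq : (w * q) 0 0 ≠ 0)
    (hwBq : w * B * q = 0) :
    obliqueProjector q w * B * s = -(B * q) ↔ ∃ α : K, s = α • (B⁻¹ * q) - q := by
  have hdet : IsUnit B.det := (isUnit_iff_isUnit_det B).mp hB
  have hPBq : obliqueProjector q w * (B * q) = B * q :=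
    obliqueProjector_mul_of_mul_eq_zero (by rwa [← Matrix.mul_assoc])
  calc obliqueProjector q w * B * s = -(B * q)
      ↔ obliqueProjector q w * (B * (s + q)) = 0 := by
        rw [Matrix.mul_add, Matrix.mul_add, hPBq, Matrix.mul_assoc, add_eq_zero_iff_eq_neg]
    _ ↔ ∃ α : K, B * (s + q) = α • q := obliqueProjector_mul_eq_zero_iff hwq
    _ ↔ ∃ α : K, s = α • (B⁻¹ * q) - q := by
        refine exists_congr fun α => ?_
        rw [eq_sub_iff_add_eq, ← Matrix.mul_smul]
        exact ⟨fun h => by rw [← h, nonsing_inv_mul_cancel_left B _ hdet],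
          fun h => by rw [h, mul_nonsing_inv_cancel_left B _ hdet]⟩

theorem right_correction_equation_iff {B : Matrix ι ι K} (hB : IsUnit B)
    {q s : Matrix ι (Fin 1) K} {v w : Matrix (Fin 1) ι K} (hvq : v * q = 1)
    (hwq : (w * q) 0 0 ≠ 0) (hwBq : w * B * q = 0) :
    (v * s = 0 ∧ obliqueProjector q w * B * (1 - q * v) * s = -(B * q)) ↔
      (v * B⁻¹ * q) 0 0 ≠ 0 ∧ s = ((v * B⁻¹ * q) 0 0)⁻¹ • (B⁻¹ * q) - q := by
  set β := (v * B⁻¹ * q) 0 0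
  have hv : ∀ α : K, v * (α • (B⁻¹ * q) - q) = 0 ↔ α * β = 1 := by
    intro α
    rw [Matrix.mul_sub, Matrix.mul_smul, hvq, ← Matrix.mul_assoc, sub_eq_zero, ← Matrix.ext_iff]
    simp [Fin.forall_fin_one, β]
  calc (v * s = 0 ∧ obliqueProjector q w * B * (1 - q * v) * s = -(B * q))
      ↔ v * s = 0 ∧ ∃ α : K, s = α • (B⁻¹ * q) - q := by
        refine and_congr_right fun hs => ?_
        rw [Matrix.mul_assoc _ (1 - q * v), one_sub_mul_mul_of_mul_eq_zero_s7 _ _ _ hs,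
          obliqueProjector_mul_mul_eq_neg_iff hB hwq hwBq]
    _ ↔ ∃ α : K, α * β = 1 ∧ s = α • (B⁻¹ * q) - q := by
        constructor
        · rintro ⟨hs, α, rfl⟩
          exact ⟨α, (hv α).mp hs, rfl⟩
        · rintro ⟨α, hα, rfl⟩
          exact ⟨(hv α).mpr hα, α, rfl⟩
    _ ↔ β ≠ 0 ∧ s = β⁻¹ • (B⁻¹ * q) - q := by
        constructor
        · rintro ⟨α, hα, rfl⟩
          rw [eq_inv_of_mul_eq_one_left hα]
          exact ⟨right_ne_zero_of_mul_eq_one hα, rfl⟩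
        · rintro ⟨hβ, rfl⟩
          exact ⟨β⁻¹, inv_mul_cancel₀ hβ, rfl⟩

/-- The alternating two-sided Jacobi–Davidson right correction equation
`(I - (q pᴴ)/(pᴴ q))(A - θ I)(I - q qᴴ) s = -r_q`, subject to `qᴴ s = 0`,
has exactly one solution iff `qᴴ (A - θ I)⁻¹ q ≠ 0`, and has no solution iff
`qᴴ (A - θ I)⁻¹ q = 0`. -/
theorem alternating_two_sided_jd_right_correction
    {n : ℕ} (A : Matrix (Fin n) (Fin n) ℂ)
    (p q : Matrix (Fin n) (Fin 1) ℂ)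
    (hq : qᴴ * q = 1)
    (hpq : (pᴴ * q) 0 0 ≠ 0)
    (θ : ℂ) (hθ : θ = (pᴴ * A * q) 0 0 / (pᴴ * q) 0 0)
    (hA : IsUnit (A - θ • (1 : Matrix (Fin n) (Fin n) ℂ)))
    (rq : Matrix (Fin n) (Fin 1) ℂ)
    (hrq : rq = (A - θ • 1) * q) :
    ((∃! s : Matrix (Fin n) (Fin 1) ℂ,
        qᴴ * s = 0 ∧
          (1 - ((pᴴ * q) 0 0)⁻¹ • (q * pᴴ)) * (A - θ • 1) * (1 - q * qᴴ) * s = -rq) ↔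
      (qᴴ * (A - θ • (1 : Matrix (Fin n) (Fin n) ℂ))⁻¹ * q) 0 0 ≠ 0) ∧
    ((¬ ∃ s : Matrix (Fin n) (Fin 1) ℂ,
        qᴴ * s = 0 ∧
          (1 - ((pᴴ * q) 0 0)⁻¹ • (q * pᴴ)) * (A - θ • 1) * (1 - q * qᴴ) * s = -rq) ↔
      (qᴴ * (A - θ • (1 : Matrix (Fin n) (Fin n) ℂ))⁻¹ * q) 0 0 = 0) := by
  have hpBq := mul_sub_smul_one_mul_eq_zero_of_eq_div A q pᴴ θ hpq hθ
  have hsolutions := fun s => right_correction_equation_iff (s := s) hA hq hpq hpBq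
  simp only [obliqueProjector, ← hrq] at hsolutions
  simp [hsolutions, ExistsUnique]
end

section
/- Suppose the Jacobi–Davidson correction equation (I - u u^H)(A - λ̃ I)(I - u u^H) v = -r with constraint u^H v = 0 has a unique solution v (i.e., U_⊥^H (A - λ̃ I) U_⊥ is invertible). Partition the inverse [U_⊥^H (A - λ̃ I) U_⊥]^{-1} = [[B_{11}, B_{12}], [B_{21}, B_{22}]] conformally with U_⊥ = [V̂_2, V̂_3], where B_{22} is (n-k)×(n-k). Then v does not lie in the column space of V_k if and only if V̂_3 B_{22} V̂_3^H r ≠ 0 (that is, r is not in the null space of V̂_3 B_{22} V̂_3^H). -/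
open Matrix

/-!
Write `W = [V̂₂, V̂₃]`, so that `[u, W]` is unitary and `1 - u uᴴ = W Wᴴ`. Since `Wᴴ W = 1`, the
correction equation compresses to `(Wᴴ (A - λ̃ I) W) (Wᴴ v) = -Wᴴ r`, and as `V̂₂ᴴ r = 0`, the lower
block of `Wᴴ v` is `V̂₃ᴴ v = -B₂₂ V̂₃ᴴ r`. Finally `v` lies in the span of `V_k = [u, V̂₂]` exactly
when `V̂₃ᴴ v = 0`, and `V̂₃` has orthonormal columns, so `B₂₂ V̂₃ᴴ r = 0 ↔ V̂₃ B₂₂ V̂₃ᴴ r = 0`.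
-/

namespace Matrix

variable {R m n n₁ n₂ p : Type*} [Semiring R]

section Star

variable [Star R]

lemma conjTranspose_fromCols_mul [Fintype m] (X : Matrix m n₁ R) (Y : Matrix m n₂ R)
    (B : Matrix m p R) : (fromCols X Y)ᴴ * B = fromRows (Xᴴ * B) (Yᴴ * B) := by
  rw [conjTranspose_fromCols_eq_fromRows_conjTranspose, fromRows_mul]

lemma conjTranspose_fromCols_mul_eq_zero_iff [Fintype m] (X : Matrix m n₁ R)
    (Y : Matrix m n₂ R) (B : Matrix m p R) :
    (fromCols X Y)ᴴ * B = 0 ↔ Xᴴ * B = 0 ∧ Yᴴ * B = 0 := by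
  rw [conjTranspose_fromCols_mul, ← fromRows_zero, fromRows_inj.eq_iff]

lemma conjTranspose_fromCols_mul_fromCols_eq_one_iff [Fintype m] [DecidableEq n₁]
    [DecidableEq n₂] (X : Matrix m n₁ R) (Y : Matrix m n₂ R) :
    (fromCols X Y)ᴴ * fromCols X Y = 1 ↔
      Xᴴ * X = 1 ∧ Xᴴ * Y = 0 ∧ Yᴴ * X = 0 ∧ Yᴴ * Y = 1 := by
  rw [conjTranspose_fromCols_eq_fromRows_conjTranspose, fromRows_mul_fromCols, ← fromBlocks_one,
    fromBlocks_inj]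

lemma fromCols_mul_conjTranspose_fromCols [Fintype n₁] [Fintype n₂]
    (X : Matrix m n₁ R) (Y : Matrix m n₂ R) :
    fromCols X Y * (fromCols X Y)ᴴ = X * Xᴴ + Y * Yᴴ := by
  rw [conjTranspose_fromCols_eq_fromRows_conjTranspose, fromCols_mul_fromRows]

lemma mul_eq_zero_iff_of_conjTranspose_mul_self_eq_one [Fintype m] [Fintype n] [DecidableEq n]
    {V : Matrix m n R} (hV : Vᴴ * V = 1) (B : Matrix n p R) : V * B = 0 ↔ B = 0 := by
  refine ⟨fun h => ?_, fun h => by rw [h, Matrix.mul_zero]⟩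
  rw [← Matrix.one_mul B, ← hV, Matrix.mul_assoc, h, Matrix.mul_zero]

lemma exists_eq_mul_iff_conjTranspose_mul_eq_zero [Fintype m] [DecidableEq m] [Fintype n₁]
    [Fintype n₂] {X : Matrix m n₁ R} {Y : Matrix m n₂ R}
    (hYX : Yᴴ * X = 0) (hXY : X * Xᴴ + Y * Yᴴ = 1) (B : Matrix m p R) :
    (∃ C : Matrix n₁ p R, B = X * C) ↔ Yᴴ * B = 0 := by
  constructor
  · rintro ⟨C, rfl⟩
    rw [← Matrix.mul_assoc, hYX, Matrix.zero_mul]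
  · intro h
    refine ⟨Xᴴ * B, ?_⟩
    calc B = (X * Xᴴ + Y * Yᴴ) * B := by rw [hXY, Matrix.one_mul]
      _ = X * (Xᴴ * B) := by
        rw [Matrix.add_mul, Matrix.mul_assoc Y, h, Matrix.mul_zero, add_zero, Matrix.mul_assoc]

end Star

lemma toRows₂_mul_fromRows_zero {m₁ m₂ : Type*} [Fintype n₁] [Fintype n₂]
    (N : Matrix (m₁ ⊕ m₂) (n₁ ⊕ n₂) R) (B : Matrix n₂ p R) :
    toRows₂ (N * fromRows (0 : Matrix n₁ p R) B) = N.toBlocks₂₂ * B := by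
  conv_lhs => rw [← fromBlocks_toBlocks N]
  rw [fromBlocks_mul_fromRows, toRows₂_fromRows, Matrix.mul_zero, zero_add]

lemma mul_mul_mul_eq_of_projected_eq [Fintype m] [Fintype n] [DecidableEq n]
    {L : Matrix n m R} {W : Matrix m n R} {S : Matrix m m R} {v r : Matrix m p R}
    (hLW : L * W = 1) (h : W * L * S * (W * L) * v = r) :
    L * S * W * (L * v) = L * r := by
  have hLWL : L * (W * L) = L := by rw [← Matrix.mul_assoc, hLW, Matrix.one_mul]
  calc L * S * W * (L * v) = L * (W * L) * S * (W * L * v) := by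
        rw [hLWL]; simp only [Matrix.mul_assoc]
    _ = L * r := by rw [← h]; simp only [Matrix.mul_assoc]

end Matrix

theorem jd_expansion_iff_block_condition_general
    {n k : ℕ}
    (A : Matrix (Fin n) (Fin n) ℂ)
    (u : Matrix (Fin n) (Fin 1) ℂ)
    (V₂ : Matrix (Fin n) (Fin (k - 1)) ℂ)
    (V₃ : Matrix (Fin n) (Fin (n - k)) ℂ)
    (hfull₁ : (fromCols u (fromCols V₂ V₃))ᴴ * fromCols u (fromCols V₂ V₃) = 1)
    (hfull₂ : fromCols u (fromCols V₂ V₃) * (fromCols u (fromCols V₂ V₃))ᴴ = 1)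
    (lam : ℂ)
    (r : Matrix (Fin n) (Fin 1) ℂ)
    (hVr : (fromCols u V₂)ᴴ * r = 0)
    (hinv : IsUnit ((fromCols V₂ V₃)ᴴ * (A - lam • 1) * fromCols V₂ V₃))
    (v : Matrix (Fin n) (Fin 1) ℂ)
    (hv₂ : (1 - u * uᴴ) * (A - lam • 1) * (1 - u * uᴴ) * v = -r)
    (B₂₂ : Matrix (Fin (n - k)) (Fin (n - k)) ℂ)
    (hB : B₂₂ = Matrix.toBlocks₂₂
        (((fromCols V₂ V₃)ᴴ * (A - lam • 1) * fromCols V₂ V₃)⁻¹)) :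
    (¬ ∃ c : Matrix (Fin 1 ⊕ Fin (k - 1)) (Fin 1) ℂ, v = fromCols u V₂ * c) ↔
      V₃ * B₂₂ * V₃ᴴ * r ≠ 0 := by
  set W := fromCols V₂ V₃ with hW
  obtain ⟨-, -, hWu, hWW⟩ := (conjTranspose_fromCols_mul_fromCols_eq_one_iff u W).mp hfull₁
  obtain ⟨-, -, hV₃V₂, hV₃V₃⟩ := (conjTranspose_fromCols_mul_fromCols_eq_one_iff V₂ V₃).mp hWW
  have hP : u * uᴴ + W * Wᴴ = 1 := (fromCols_mul_conjTranspose_fromCols u W).symm.trans hfull₂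
  have hV₃u : V₃ᴴ * u = 0 := ((conjTranspose_fromCols_mul_eq_zero_iff V₂ V₃ u).mp hWu).2
  have hV₂r : V₂ᴴ * r = 0 := ((conjTranspose_fromCols_mul_eq_zero_iff u V₂ r).mp hVr).2
  have hV₃v : V₃ᴴ * v = B₂₂ * (V₃ᴴ * -r) := by
    set M := Wᴴ * (A - lam • 1) * W
    rw [sub_eq_of_eq_add' hP.symm] at hv₂
    have hWv : Wᴴ * v = M⁻¹ * fromRows (0 : Matrix (Fin (k - 1)) (Fin 1) ℂ) (V₃ᴴ * -r) := by
      rw [← nonsing_inv_mul_cancel_left M (Wᴴ * v) ((isUnit_iff_isUnit_det M).mp hinv),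
        mul_mul_mul_eq_of_projected_eq hWW hv₂, conjTranspose_fromCols_mul, Matrix.mul_neg V₂ᴴ,
        hV₂r, neg_zero]
    simpa only [hW, conjTranspose_fromCols_mul, toRows₂_fromRows, toRows₂_mul_fromRows_zero,
      ← hB] using congrArg toRows₂ hWv
  have hspan : (∃ c : Matrix (Fin 1 ⊕ Fin (k - 1)) (Fin 1) ℂ, v = fromCols u V₂ * c) ↔
      V₃ᴴ * v = 0 := by
    refine exists_eq_mul_iff_conjTranspose_mul_eq_zero ?_ ?_ v
    · rw [mul_fromCols, hV₃u, hV₃V₂, fromCols_zero]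
    · rw [fromCols_mul_conjTranspose_fromCols, add_assoc,
        ← fromCols_mul_conjTranspose_fromCols V₂ V₃, hP]
  rw [hspan, hV₃v, Matrix.mul_neg, Matrix.mul_neg, neg_eq_zero,
    ← mul_eq_zero_iff_of_conjTranspose_mul_self_eq_one hV₃V₃]
  simp only [Matrix.mul_assoc]

/-- Suppose the Jacobi–Davidson correction equation has a unique solution `v`
(i.e. `U⊥ᴴ (A - λ̃ I) U⊥` is invertible, where `U⊥ = [V̂₂, V̂₃]` and
`[u, V̂₂, V̂₃]` is unitary with `V_k = [u, V̂₂]`).  Partition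
`[U⊥ᴴ (A - λ̃ I) U⊥]⁻¹` conformally, with lower-right block `B₂₂`.
Then `v` is not in the column space of `V_k` iff `V̂₃ B₂₂ V̂₃ᴴ r ≠ 0`. -/
theorem jd_expansion_iff_block_condition
    {n k : ℕ} (hk : 1 ≤ k) (hkn : k < n)
    (A : Matrix (Fin n) (Fin n) ℂ)
    (u : Matrix (Fin n) (Fin 1) ℂ)
    (V₂ : Matrix (Fin n) (Fin (k - 1)) ℂ)
    (V₃ : Matrix (Fin n) (Fin (n - k)) ℂ)
    (hfull₁ : (fromCols u (fromCols V₂ V₃))ᴴ * fromCols u (fromCols V₂ V₃) = 1)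
    (hfull₂ : fromCols u (fromCols V₂ V₃) * (fromCols u (fromCols V₂ V₃))ᴴ = 1)
    (lam : ℂ) (hlam : lam = (uᴴ * A * u) 0 0)
    (r : Matrix (Fin n) (Fin 1) ℂ)
    (hr : r = (A - lam • 1) * u)
    (hVr : (fromCols u V₂)ᴴ * r = 0)
    (hinv : IsUnit ((fromCols V₂ V₃)ᴴ * (A - lam • 1) * fromCols V₂ V₃))
    (v : Matrix (Fin n) (Fin 1) ℂ)
    (hv₁ : uᴴ * v = 0)
    (hv₂ : (1 - u * uᴴ) * (A - lam • 1) * (1 - u * uᴴ) * v = -r)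
    (B₂₂ : Matrix (Fin (n - k)) (Fin (n - k)) ℂ)
    (hB : B₂₂ = Matrix.toBlocks₂₂
        (((fromCols V₂ V₃)ᴴ * (A - lam • 1) * fromCols V₂ V₃)⁻¹)) :
    (¬ ∃ c : Matrix (Fin 1 ⊕ Fin (k - 1)) (Fin 1) ℂ, v = fromCols u V₂ * c) ↔
      V₃ * B₂₂ * V₃ᴴ * r ≠ 0 :=
  jd_expansion_iff_block_condition_general A u V₂ V₃ hfull₁ hfull₂ lam r hVr hinv v hv₂ B₂₂ hB
end

section
/- Suppose u^H (A - λ̃ I)^{-1} u ≠ 0 and let v be the unique solution of the Jacobi–Davidson correction equation (I - u u^H)(A - λ̃ I)(I - u u^H) v = -r with constraint u^H v = 0. Then v does not lie in the column space of V_k if and only if u does not lie in the column space of the matrix (A - λ̃ I) V_k (equivalently, (A - λ̃ I)^{-1} u does not lie in the column space of V_k). -/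
/-! With `B = A - λ̃ I` and `w = uᴴ B v`, the correction equation together with `uᴴ v = 0` says
`B (v + u) = u w`, i.e. `v + u = B⁻¹ u w`. Applying `uᴴ` gives `(uᴴ B⁻¹ u) w = 1`, so `w` is
invertible. As `u` lies in the column space of `V`, so does `v` exactly when `B⁻¹ u` does, that is,
exactly when `u` lies in the column space of `B V`. -/

open Matrix

namespace Matrix

variable {R : Type*} {m p k : Type*}

theorem exists_eq_mul_mul_iff_exists_inv_mul_eq [CommRing R] [Fintype m] [DecidableEq m]
    [Fintype k] {B : Matrix m m R} (hB : IsUnit B)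
    (V : Matrix m k R) (u : Matrix m p R) :
    (∃ c : Matrix k p R, u = B * V * c) ↔ ∃ c : Matrix k p R, B⁻¹ * u = V * c := by
  have hdet := (isUnit_iff_isUnit_det B).mp hB
  refine exists_congr fun c => ⟨fun h => ?_, fun h => ?_⟩
  · rw [h, Matrix.mul_assoc, nonsing_inv_mul_cancel_left _ _ hdet]
  · rw [Matrix.mul_assoc, ← h, mul_nonsing_inv_cancel_left _ _ hdet]

theorem exists_eq_mul_iff_of_add_eq_mul_isUnit [Ring R] [Fintype p] [DecidableEq p]
    [Fintype k] {V : Matrix m k R} {u v x : Matrix m p R}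
    {w : Matrix p p R} (hu : ∃ c : Matrix k p R, u = V * c) (hw : IsUnit w) (h : v + u = x * w) :
    (∃ c : Matrix k p R, v = V * c) ↔ ∃ c : Matrix k p R, x = V * c := by
  obtain ⟨c₀, rfl⟩ := hu
  obtain ⟨w, rfl⟩ := hw
  constructor
  · rintro ⟨c, rfl⟩
    refine ⟨(c + c₀) * (↑w⁻¹ : Matrix p p R), ?_⟩
    rw [← Matrix.mul_assoc, Matrix.mul_add, h, Matrix.mul_assoc, Units.mul_inv, Matrix.mul_one]
  · rintro ⟨c, rfl⟩
    refine ⟨c * (w : Matrix p p R) - c₀, ?_⟩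
    rw [Matrix.mul_sub, ← Matrix.mul_assoc, ← h, add_sub_cancel_right]

/-- `1 - u * P` generalizes the projector `1 - u uᴴ` of the Jacobi–Davidson correction
equation. -/
theorem mul_add_eq_of_correction_eq [Ring R] [Fintype m] [DecidableEq m] [Fintype p]
    {B : Matrix m m R} {P : Matrix p m R} {u v : Matrix m p R}
    (hPv : P * v = 0) (hv : (1 - u * P) * B * (1 - u * P) * v = -(B * u)) :
    B * (v + u) = u * (P * B * v) := by
  have hproj : (1 - u * P) * v = v := by
    rw [Matrix.sub_mul, Matrix.one_mul, Matrix.mul_assoc, hPv, Matrix.mul_zero, sub_zero]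
  rw [Matrix.mul_assoc, hproj, Matrix.mul_assoc, Matrix.sub_mul, Matrix.one_mul] at hv
  rw [Matrix.mul_add, Matrix.mul_assoc P, ← Matrix.mul_assoc u]
  linear_combination (norm := module) hv

theorem exists_isUnit_add_eq_inv_mul_mul_of_correction_eq [CommRing R] [Fintype m]
    [DecidableEq m] [Fintype p] [DecidableEq p] {B : Matrix m m R} (hB : IsUnit B)
    {P : Matrix p m R} {u v : Matrix m p R} (hPu : P * u = 1) (hPv : P * v = 0)
    (hv : (1 - u * P) * B * (1 - u * P) * v = -(B * u)) :
    ∃ w : Matrix p p R, IsUnit w ∧ v + u = B⁻¹ * u * w := by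
  have hdet := (isUnit_iff_isUnit_det B).mp hB
  have hsum : v + u = B⁻¹ * u * (P * B * v) := by
    rw [Matrix.mul_assoc, ← mul_add_eq_of_correction_eq hPv hv,
      nonsing_inv_mul_cancel_left _ _ hdet]
  have hleft : P * (B⁻¹ * u) * (P * B * v) = 1 := by
    rw [Matrix.mul_assoc, ← hsum, Matrix.mul_add, hPv, hPu, zero_add]
  exact ⟨_, (isUnit_iff_isUnit_det _).mpr (isUnit_det_of_left_inverse hleft), hsum⟩

end Matrix

theorem jd_expansion_iff_u_not_in_range_general
    {n k : ℕ} (A : Matrix (Fin n) (Fin n) ℂ)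
    (V : Matrix (Fin n) (Fin k) ℂ)
    (u : Matrix (Fin n) (Fin 1) ℂ)
    (huV : ∃ c : Matrix (Fin k) (Fin 1) ℂ, u = V * c)
    (hu : uᴴ * u = 1)
    (lam : ℂ)
    (hA : IsUnit (A - lam • (1 : Matrix (Fin n) (Fin n) ℂ)))
    (r : Matrix (Fin n) (Fin 1) ℂ)
    (hr : r = (A - lam • 1) * u)
    (v : Matrix (Fin n) (Fin 1) ℂ)
    (hv₁ : uᴴ * v = 0)
    (hv₂ : (1 - u * uᴴ) * (A - lam • 1) * (1 - u * uᴴ) * v = -r) :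
    (¬ ∃ c : Matrix (Fin k) (Fin 1) ℂ, v = V * c) ↔
      ¬ ∃ c : Matrix (Fin k) (Fin 1) ℂ, u = (A - lam • 1) * V * c := by
  subst hr
  obtain ⟨w, hw, hsum⟩ := exists_isUnit_add_eq_inv_mul_mul_of_correction_eq hA hu hv₁ hv₂
  exact not_congr ((exists_eq_mul_iff_of_add_eq_mul_isUnit huV hw hsum).trans
    (exists_eq_mul_mul_iff_exists_inv_mul_eq hA V u).symm)

/-- If the Jacobi–Davidson correction equation has a unique solution `v`
(i.e. `uᴴ (A - λ̃ I)⁻¹ u ≠ 0`), then `v` is not in the column space of `V_k`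
iff `u` is not in the column space of `(A - λ̃ I) V_k`. -/
theorem jd_expansion_iff_u_not_in_range
    {n k : ℕ} (A : Matrix (Fin n) (Fin n) ℂ)
    (V : Matrix (Fin n) (Fin k) ℂ) (hV : Vᴴ * V = 1)
    (u : Matrix (Fin n) (Fin 1) ℂ)
    (huV : ∃ c : Matrix (Fin k) (Fin 1) ℂ, u = V * c)
    (hu : uᴴ * u = 1)
    (lam : ℂ) (hlam : lam = (uᴴ * A * u) 0 0)
    (hA : IsUnit (A - lam • (1 : Matrix (Fin n) (Fin n) ℂ)))
    (r : Matrix (Fin n) (Fin 1) ℂ)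
    (hr : r = (A - lam • 1) * u)
    (hα : (uᴴ * (A - lam • (1 : Matrix (Fin n) (Fin n) ℂ))⁻¹ * u) 0 0 ≠ 0)
    (v : Matrix (Fin n) (Fin 1) ℂ)
    (hv₁ : uᴴ * v = 0)
    (hv₂ : (1 - u * uᴴ) * (A - lam • 1) * (1 - u * uᴴ) * v = -r) :
    (¬ ∃ c : Matrix (Fin k) (Fin 1) ℂ, v = V * c) ↔
      ¬ ∃ c : Matrix (Fin k) (Fin 1) ℂ, u = (A - lam • 1) * V * c :=
  jd_expansion_iff_u_not_in_range_general A V u huV hu lam hA r hr v hv₁ hv₂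
end

section
/- Suppose u^H (A - λ̃ I)^{-1} u ≠ 0 and let v be the unique solution of the Jacobi–Davidson correction equation (I - u u^H)(A - λ̃ I)(I - u u^H) v = -r with constraint u^H v = 0. If v lies in the column space of V_k (the Jacobi–Davidson method stagnates), then λ̃ is a defective eigenvalue of the projection matrix T_k = V_k^H A V_k; that is, there exists a vector h ∈ ℂ^k with (T_k - λ̃ I) h ≠ 0 and (T_k - λ̃ I)² h = 0. -/
/-!
Write `B = A - λ̃ I`. Since `uᴴ v = 0`, the correction equation says `B v = u β - r` with
`β = uᴴ B v`. Compressing with `V_kᴴ`, and using `V_kᴴ r = (T_k - λ̃ I) y = 0`, gives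
`(T_k - λ̃ I) c = y β` for `v = V_k c`. Moreover `β ≠ 0`: otherwise `B v = -B u`, so `v = -u`,
contradicting `uᴴ v = 0`. Hence `h = c` is a generalized eigenvector of `T_k` of order two.
-/

open Matrix

namespace Matrix

variable {R : Type*} {l m n p : Type*}

theorem one_sub_mul_mul_one_sub_mul_of_mul_eq_zero_s13 [Ring R] [Fintype n] [Fintype p]
    [DecidableEq n] (u : Matrix n p R) {w : Matrix p n R} (B : Matrix n n R) {v : Matrix n l R}
    (hv : w * v = 0) :
    (1 - u * w) * B * (1 - u * w) * v = B * v - u * (w * (B * v)) := by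
  simp only [Matrix.sub_mul, Matrix.mul_sub, Matrix.one_mul, Matrix.mul_one, Matrix.mul_assoc,
    hv, Matrix.mul_zero, sub_zero]

theorem conjTranspose_mul_mul_mul_of_conjTranspose_mul_self_eq_one [Semiring R] [StarRing R]
    [Fintype m] [Fintype n] [DecidableEq m]
    {V : Matrix n m R} (hV : Vᴴ * V = 1) (x : Matrix m l R) (z : Matrix m p R) :
    (V * x)ᴴ * (V * z) = xᴴ * z := by
  rw [conjTranspose_mul, Matrix.mul_assoc, ← Matrix.mul_assoc Vᴴ, hV, Matrix.one_mul]

theorem conjTranspose_mul_sub_smul_one_mul [CommRing R] [StarRing R] [Fintype m] [Fintype n]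
    [DecidableEq m] [DecidableEq n] {V : Matrix n m R} (hV : Vᴴ * V = 1) (A : Matrix n n R)
    (μ : R) :
    Vᴴ * (A - μ • 1) * V = Vᴴ * A * V - μ • 1 := by
  rw [Matrix.mul_sub, Matrix.sub_mul, Matrix.mul_smul, Matrix.smul_mul, Matrix.mul_one, hV]

theorem mul_ne_zero_of_conjTranspose_mul_self_eq_one [Semiring R] [StarRing R]
    [Fintype m] [Fintype n] [DecidableEq m]
    {y : Matrix n m R} (hy : yᴴ * y = 1) {β : Matrix m p R} (hβ : β ≠ 0) : y * β ≠ 0 := by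
  intro h
  apply hβ
  rw [← Matrix.one_mul β, ← hy, Matrix.mul_assoc, h, Matrix.mul_zero]

theorem mul_add_ne_zero_of_isUnit [CommRing R] [Nontrivial R] [Fintype n] [DecidableEq n]
    [Fintype p] [DecidableEq p] [Nonempty p] {B : Matrix n n R} (hB : IsUnit B)
    {w : Matrix p n R} {u v : Matrix n p R} (hu : w * u = 1) (hv : w * v = 0) :
    B * (v + u) ≠ 0 := by
  have := hB.invertible
  rw [← Matrix.mul_zero B, Ne, Matrix.mul_right_inj_of_invertible]
  intro hvu
  have h := congrArg (w * ·) hvu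
  simp only [Matrix.mul_add, hu, hv, zero_add, Matrix.mul_zero] at h
  exact one_ne_zero h

end Matrix

theorem jd_stagnation_implies_defective_general
    {n k : ℕ} (A : Matrix (Fin n) (Fin n) ℂ)
    (V : Matrix (Fin n) (Fin k) ℂ) (hV : Vᴴ * V = 1)
    (y : Matrix (Fin k) (Fin 1) ℂ) (lam : ℂ)
    (hy : (Vᴴ * A * V) * y = lam • y)
    (u : Matrix (Fin n) (Fin 1) ℂ) (hu : u = V * y)
    (hunorm : uᴴ * u = 1)
    (hA : IsUnit (A - lam • (1 : Matrix (Fin n) (Fin n) ℂ)))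
    (r : Matrix (Fin n) (Fin 1) ℂ)
    (hr : r = (A - lam • 1) * u)
    (v : Matrix (Fin n) (Fin 1) ℂ)
    (hv₁ : uᴴ * v = 0)
    (hv₂ : (1 - u * uᴴ) * (A - lam • 1) * (1 - u * uᴴ) * v = -r)
    (hstag : ∃ c : Matrix (Fin k) (Fin 1) ℂ, v = V * c) :
    ∃ h : Matrix (Fin k) (Fin 1) ℂ,
      (Vᴴ * A * V - lam • 1) * h ≠ 0 ∧
        (Vᴴ * A * V - lam • 1) ^ 2 * h = 0 := by
  obtain ⟨c, rfl⟩ := hstag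
  set B := A - lam • 1
  set β := uᴴ * (B * (V * c))
  have hBv : B * (V * c) = u * β - r := by
    rw [one_sub_mul_mul_one_sub_mul_of_mul_eq_zero_s13 u B hv₁] at hv₂
    rw [eq_sub_iff_add_eq, ← neg_neg r, ← hv₂]
    abel
  clear_value β
  have hβ : β ≠ 0 := by
    rintro rfl
    apply mul_add_ne_zero_of_isUnit hA hunorm hv₁
    rw [Matrix.mul_add, hBv, hr, Matrix.mul_zero, zero_sub, neg_add_cancel]
  have hTy : (Vᴴ * A * V - lam • 1) * y = 0 := by
    rw [Matrix.sub_mul, Matrix.smul_mul, Matrix.one_mul, hy, sub_self]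
  have hVr : Vᴴ * r = 0 := by
    rw [hr, hu, ← Matrix.mul_assoc, ← Matrix.mul_assoc, conjTranspose_mul_sub_smul_one_mul hV,
      hTy]
  have hTc : (Vᴴ * A * V - lam • 1) * c = y * β := by
    rw [← conjTranspose_mul_sub_smul_one_mul hV, Matrix.mul_assoc, Matrix.mul_assoc, hBv,
      Matrix.mul_sub, hVr, sub_zero, ← Matrix.mul_assoc, hu, ← Matrix.mul_assoc, hV,
      Matrix.one_mul]
  have hyy : yᴴ * y = 1 := by
    rwa [hu, conjTranspose_mul_mul_mul_of_conjTranspose_mul_self_eq_one hV] at hunorm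
  refine ⟨c, hTc ▸ Matrix.mul_ne_zero_of_conjTranspose_mul_self_eq_one hyy hβ, ?_⟩
  rw [pow_two, Matrix.mul_assoc, hTc, ← Matrix.mul_assoc, hTy, Matrix.zero_mul]

/-- If the Jacobi–Davidson method stagnates (the unique solution `v` of the
correction equation lies in the column space of `V_k`), then `λ̃` is a
defective eigenvalue of `T_k = V_kᴴ A V_k`: there is `h` with
`(T_k - λ̃ I) h ≠ 0` and `(T_k - λ̃ I)² h = 0`. -/
theorem jd_stagnation_implies_defective
    {n k : ℕ} (A : Matrix (Fin n) (Fin n) ℂ)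
    (V : Matrix (Fin n) (Fin k) ℂ) (hV : Vᴴ * V = 1)
    (y : Matrix (Fin k) (Fin 1) ℂ) (lam : ℂ)
    (hy : (Vᴴ * A * V) * y = lam • y)
    (u : Matrix (Fin n) (Fin 1) ℂ) (hu : u = V * y)
    (hunorm : uᴴ * u = 1)
    (hA : IsUnit (A - lam • (1 : Matrix (Fin n) (Fin n) ℂ)))
    (r : Matrix (Fin n) (Fin 1) ℂ)
    (hr : r = (A - lam • 1) * u)
    (hα : (uᴴ * (A - lam • (1 : Matrix (Fin n) (Fin n) ℂ))⁻¹ * u) 0 0 ≠ 0)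
    (v : Matrix (Fin n) (Fin 1) ℂ)
    (hv₁ : uᴴ * v = 0)
    (hv₂ : (1 - u * uᴴ) * (A - lam • 1) * (1 - u * uᴴ) * v = -r)
    (hstag : ∃ c : Matrix (Fin k) (Fin 1) ℂ, v = V * c) :
    ∃ h : Matrix (Fin k) (Fin 1) ℂ,
      (Vᴴ * A * V - lam • 1) * h ≠ 0 ∧
        (Vᴴ * A * V - lam • 1) ^ 2 * h = 0 :=
  jd_stagnation_implies_defective_general A V hV y lam hy u hu hunorm hA r hr v hv₁ hv₂ hstag
end

section
/- Suppose there exists h ∈ ℂ^k with u = (A - λ̃ I) V_k h. Then (T_k - λ̃ I) h = y, and consequently (T_k - λ̃ I) h ≠ 0 while (T_k - λ̃ I)² h = 0, where T_k = V_k^H A V_k. -/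
open Matrix

namespace Matrix

variable {n k l R : Type*} [DecidableEq k] [CommRing R]

theorem mul_sub_smul_one_mul_of_mul_eq_one [Fintype n] [DecidableEq n]
    {W : Matrix k n R} {V : Matrix n k R} (hWV : W * V = 1) (A : Matrix n n R) (c : R) :
    W * (A - c • 1) * V = W * A * V - c • 1 := by
  rw [Matrix.mul_sub, Matrix.sub_mul, Matrix.mul_smul, Matrix.mul_one, Matrix.smul_mul, hWV]

variable [Fintype k]

theorem sub_smul_one_mul_eq_zero_of_mul_eq_smul {T : Matrix k k R} {y : Matrix k l R} {c : R}
    (hy : T * y = c • y) : (T - c • 1) * y = 0 := by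
  rw [Matrix.sub_mul, hy, Matrix.smul_mul, Matrix.one_mul, sub_self]

theorem sq_mul_eq_zero_of_mul_eq_of_mul_eq_zero {M : Matrix k k R} {h y : Matrix k l R}
    (hMh : M * h = y) (hMy : M * y = 0) : M ^ 2 * h = 0 := by
  rw [sq, Matrix.mul_assoc, hMh, hMy]

end Matrix

/-- If `u = (A - λ̃ I) V_k h` for some `h`, then `(T_k - λ̃ I) h = y`, and
consequently `(T_k - λ̃ I) h ≠ 0` while `(T_k - λ̃ I)² h = 0`,
where `T_k = V_kᴴ A V_k`, `T_k y = λ̃ y`, `y ≠ 0` and `u = V_k y`. -/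
theorem jd_defectiveness_construction
    {n k : ℕ} (A : Matrix (Fin n) (Fin n) ℂ)
    (V : Matrix (Fin n) (Fin k) ℂ) (hV : Vᴴ * V = 1)
    (y : Matrix (Fin k) (Fin 1) ℂ) (hy0 : y ≠ 0) (lam : ℂ)
    (hy : (Vᴴ * A * V) * y = lam • y)
    (u : Matrix (Fin n) (Fin 1) ℂ) (hu : u = V * y)
    (h : Matrix (Fin k) (Fin 1) ℂ)
    (hh : u = (A - lam • 1) * V * h) :
    (Vᴴ * A * V - lam • 1) * h = y ∧
      (Vᴴ * A * V - lam • 1) * h ≠ 0 ∧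
      (Vᴴ * A * V - lam • 1) ^ 2 * h = 0 := by
  have hVu : Vᴴ * u = y := by rw [hu, ← Matrix.mul_assoc, hV, Matrix.one_mul]
  have hchain : (Vᴴ * A * V - lam • 1) * h = y := by
    rw [← mul_sub_smul_one_mul_of_mul_eq_one hV, ← hVu, hh]
    simp only [Matrix.mul_assoc]
  exact ⟨hchain, hchain ▸ hy0,
    sq_mul_eq_zero_of_mul_eq_of_mul_eq_zero hchain (sub_smul_one_mul_eq_zero_of_mul_eq_smul hy)⟩
end

section
/- Suppose M := W^H (A - λ̃ I)^{-1} W is invertible and let v be the unique solution of the alternative correction equation (I - W W^H)(A - λ̃ I)(I - W W^H) v = -r with constraint W^H v = 0. Then v does not lie in the column space of V_k if and only if the vector W M^{-1} W^H u does not lie in the column space of the matrix (A - λ̃ I) V_k. -/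
/-!
Write `B = A - λ̃ I`, `P = Wᴴ` and `M = P B⁻¹ W`. Since `P v = 0`, the correction equation says
`B v - W (P B v) = -r = -B u`, so `B (v + u) = W s` with `s = P B v`. Applying `P B⁻¹` and using
`P v = 0` again gives `M s = P u`, hence `B (v + u) = W M⁻¹ P u`. As `u` lies in the span of `W`,
hence of `V`, `v` does iff `v + u` does, and since `B` is invertible this happens iff `B (v + u)`
lies in the span of `B V`.
-/

open Matrix

namespace Matrix

variable {R : Type*} {n m k ι : Type*}

theorem exists_add_eq_mul_iff [Ring R] [Fintype k] (V : Matrix n k R) {u v : Matrix n ι R}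
    (hu : ∃ c : Matrix k ι R, u = V * c) :
    (∃ c : Matrix k ι R, v + u = V * c) ↔ ∃ c : Matrix k ι R, v = V * c := by
  obtain ⟨cu, rfl⟩ := hu
  constructor
  · rintro ⟨c, hc⟩
    exact ⟨c - cu, by rw [Matrix.mul_sub, ← hc, add_sub_cancel_right]⟩
  · rintro ⟨c, rfl⟩
    exact ⟨c + cu, (Matrix.mul_add V c cu).symm⟩

theorem mul_add_eq_of_projected_mul_eq_neg [Ring R] [Fintype n] [Fintype m] [DecidableEq n]
    (B : Matrix n n R) (W : Matrix n m R) (P : Matrix m n R) {u v : Matrix n ι R} (hv : P * v = 0)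
    (hcorr : (1 - W * P) * B * (1 - W * P) * v = -(B * u)) :
    B * (v + u) = W * (P * (B * v)) := by
  have hproj : (1 - W * P) * v = v := by
    rw [Matrix.sub_mul, Matrix.one_mul, Matrix.mul_assoc, hv, Matrix.mul_zero, sub_zero]
  rw [Matrix.mul_assoc, hproj, Matrix.mul_assoc, Matrix.sub_mul, Matrix.one_mul,
    Matrix.mul_assoc] at hcorr
  rw [Matrix.mul_add, ← sub_eq_zero, add_sub_right_comm, hcorr, neg_add_cancel]

variable [CommRing R] [Fintype n] [DecidableEq n]

theorem exists_mul_eq_mul_mul_iff [Fintype k] {B : Matrix n n R} (hB : IsUnit B)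
    (V : Matrix n k R) {x : Matrix n ι R} :
    (∃ c : Matrix k ι R, B * x = B * V * c) ↔ ∃ c : Matrix k ι R, x = V * c := by
  have := hB.invertible
  simp only [Matrix.mul_assoc, mul_right_inj_of_invertible]

theorem mul_inv_mul_mul_eq_of_mul_add_eq [Fintype m] {B : Matrix n n R} (hB : IsUnit B)
    (W : Matrix n m R) {P : Matrix m n R} {u v : Matrix n ι R} {s : Matrix m ι R} (hv : P * v = 0)
    (hs : B * (v + u) = W * s) : P * B⁻¹ * W * s = P * u := by
  have := hB.invertible
  have hvu : B⁻¹ * (W * s) = v + u := (inv_mul_eq_iff_eq_mul_of_invertible B _ _).mpr hs.symm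
  rw [Matrix.mul_assoc, Matrix.mul_assoc, hvu, Matrix.mul_add, hv, zero_add]

theorem mul_add_eq_mul_inv_mul_of_projected_mul_eq_neg [Fintype m] [DecidableEq m]
    {B : Matrix n n R} (hB : IsUnit B) (W : Matrix n m R) (P : Matrix m n R)
    (hM : IsUnit (P * B⁻¹ * W)) {u v : Matrix n ι R}
    (hv : P * v = 0) (hcorr : (1 - W * P) * B * (1 - W * P) * v = -(B * u)) :
    B * (v + u) = W * (P * B⁻¹ * W)⁻¹ * P * u := by
  have := hM.invertible
  have hs := mul_add_eq_of_projected_mul_eq_neg B W P hv hcorr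
  have hMs := mul_inv_mul_mul_eq_of_mul_add_eq hB W hv hs
  rw [hs, Matrix.mul_assoc W, Matrix.mul_assoc W, Matrix.mul_assoc _ P u, ← hMs,
    inv_mul_cancel_left_of_invertible]

end Matrix

theorem alt_correction_expansion_iff_general
    {n k m : ℕ} (A : Matrix (Fin n) (Fin n) ℂ) (lam : ℂ)
    (hA : IsUnit (A - lam • (1 : Matrix (Fin n) (Fin n) ℂ)))
    (V : Matrix (Fin n) (Fin k) ℂ)
    (W : Matrix (Fin n) (Fin m) ℂ)
    (hWV : ∀ x : Matrix (Fin m) (Fin 1) ℂ, ∃ c : Matrix (Fin k) (Fin 1) ℂ, W * x = V * c)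
    (u : Matrix (Fin n) (Fin 1) ℂ)
    (huW : ∃ c : Matrix (Fin m) (Fin 1) ℂ, u = W * c)
    (r : Matrix (Fin n) (Fin 1) ℂ)
    (hr : r = (A - lam • 1) * u)
    (M : Matrix (Fin m) (Fin m) ℂ)
    (hM : M = Wᴴ * (A - lam • (1 : Matrix (Fin n) (Fin n) ℂ))⁻¹ * W)
    (hMunit : IsUnit M)
    (v : Matrix (Fin n) (Fin 1) ℂ)
    (hv₁ : Wᴴ * v = 0)
    (hv₂ : (1 - W * Wᴴ) * (A - lam • 1) * (1 - W * Wᴴ) * v = -r) :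
    (¬ ∃ c : Matrix (Fin k) (Fin 1) ℂ, v = V * c) ↔
      ¬ ∃ c : Matrix (Fin k) (Fin 1) ℂ, W * M⁻¹ * Wᴴ * u = (A - lam • 1) * V * c := by
  subst hr hM
  have huV : ∃ c, u = V * c := by
    obtain ⟨c, rfl⟩ := huW
    exact hWV c
  rw [← exists_add_eq_mul_iff V huV, ← exists_mul_eq_mul_mul_iff hA,
    mul_add_eq_mul_inv_mul_of_projected_mul_eq_neg hA W Wᴴ hMunit hv₁ hv₂]

/-- Suppose `M = Wᴴ (A - λ̃ I)⁻¹ W` is invertible and `v` is the unique solution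
of the alternative correction equation. Then `v` is not in the column space of
`V_k` iff `W M⁻¹ Wᴴ u` is not in the column space of `(A - λ̃ I) V_k`. -/
theorem alt_correction_expansion_iff
    {n k m : ℕ} (A : Matrix (Fin n) (Fin n) ℂ) (lam : ℂ)
    (hA : IsUnit (A - lam • (1 : Matrix (Fin n) (Fin n) ℂ)))
    (V : Matrix (Fin n) (Fin k) ℂ) (hV : Vᴴ * V = 1)
    (W : Matrix (Fin n) (Fin m) ℂ) (hW : Wᴴ * W = 1)
    (hWV : ∀ x : Matrix (Fin m) (Fin 1) ℂ, ∃ c : Matrix (Fin k) (Fin 1) ℂ, W * x = V * c)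
    (u : Matrix (Fin n) (Fin 1) ℂ)
    (huW : ∃ c : Matrix (Fin m) (Fin 1) ℂ, u = W * c)
    (hu : uᴴ * u = 1)
    (hlam : (uᴴ * A * u) 0 0 = lam)
    (r : Matrix (Fin n) (Fin 1) ℂ)
    (hr : r = (A - lam • 1) * u)
    (hVr : Vᴴ * r = 0)
    (M : Matrix (Fin m) (Fin m) ℂ)
    (hM : M = Wᴴ * (A - lam • (1 : Matrix (Fin n) (Fin n) ℂ))⁻¹ * W)
    (hMunit : IsUnit M)
    (v : Matrix (Fin n) (Fin 1) ℂ)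
    (hv₁ : Wᴴ * v = 0)
    (hv₂ : (1 - W * Wᴴ) * (A - lam • 1) * (1 - W * Wᴴ) * v = -r) :
    (¬ ∃ c : Matrix (Fin k) (Fin 1) ℂ, v = V * c) ↔
      ¬ ∃ c : Matrix (Fin k) (Fin 1) ℂ, W * M⁻¹ * Wᴴ * u = (A - lam • 1) * V * c :=
  alt_correction_expansion_iff_general A lam hA V W hWV u huW r hr M hM hMunit v hv₁ hv₂
end

section
/- Suppose M := W^H (A - λ̃ I)^{-1} W is invertible. Then the vector v = -u + (A - λ̃ I)^{-1} W M^{-1} W^H u satisfies W^H v = 0 and (I - W W^H)(A - λ̃ I)(I - W W^H) v = -r, i.e., it is the unique solution of the alternative correction equation. -/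
/-!
Write `B = A - λ̃ I` and `P = I - W Wᴴ`. Since `P` kills exactly the column space of `W`, a
vector `w` with `Wᴴ w = 0` solves `P B P w = -r = -B u` iff `B (w + u) = W c` for some `c`,
i.e. `w = -u + B⁻¹ W c`. The remaining condition `Wᴴ w = 0` then reads `M c = Wᴴ u`, which
pins down `c = M⁻¹ Wᴴ u`.
-/

open Matrix

section LeftInverse

variable {R ι κ γ : Type*} [CommRing R] [Fintype ι] [DecidableEq ι] [Fintype κ]
  {W : Matrix ι κ R} {V : Matrix κ ι R}

theorem Matrix.one_sub_mul_mul_eq_self_of_mul_eq_zero_s16 {x : Matrix ι γ R} (h : V * x = 0) :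
    (1 - W * V) * x = x := by
  rw [Matrix.sub_mul, Matrix.one_mul, Matrix.mul_assoc, h, Matrix.mul_zero, sub_zero]

variable [DecidableEq κ]

theorem Matrix.one_sub_mul_mul_eq_zero_iff_s16 (hVW : V * W = 1) {y : Matrix ι γ R} :
    (1 - W * V) * y = 0 ↔ ∃ c : Matrix κ γ R, y = W * c := by
  constructor
  · intro hy
    exact ⟨V * y, by rwa [Matrix.sub_mul, Matrix.one_mul, Matrix.mul_assoc, sub_eq_zero] at hy⟩
  · rintro ⟨c, rfl⟩
    rw [Matrix.sub_mul, Matrix.one_mul, Matrix.mul_assoc W V, ← Matrix.mul_assoc V, hVW,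
      Matrix.one_mul, sub_self]

theorem Matrix.correction_eq_iff_exists {B : Matrix ι ι R} (hVW : V * W = 1)
    {u x : Matrix ι γ R} (hVBu : V * (B * u) = 0) (hVx : V * x = 0) :
    (1 - W * V) * B * (1 - W * V) * x = -(B * u) ↔
      ∃ c : Matrix κ γ R, B * (x + u) = W * c := by
  rw [← one_sub_mul_mul_eq_zero_iff_s16 hVW, Matrix.mul_assoc _ _ x,
    one_sub_mul_mul_eq_self_of_mul_eq_zero_s16 hVx, Matrix.mul_assoc, Matrix.mul_add, Matrix.mul_add,
    one_sub_mul_mul_eq_self_of_mul_eq_zero_s16 hVBu, eq_neg_iff_add_eq_zero]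

theorem Matrix.correction_eq_iff {B : Matrix ι ι R} (hB : IsUnit B) (hVW : V * W = 1)
    {u : Matrix ι γ R} (hVBu : V * (B * u) = 0) (hM : IsUnit (V * B⁻¹ * W))
    {x : Matrix ι γ R} :
    V * x = 0 ∧ (1 - W * V) * B * (1 - W * V) * x = -(B * u) ↔
      x = -u + B⁻¹ * W * (V * B⁻¹ * W)⁻¹ * V * u := by
  have hBdet := (isUnit_iff_isUnit_det B).mp hB
  have hMdet := (isUnit_iff_isUnit_det _).mp hM
  constructor
  · rintro ⟨hVx, hx⟩
    obtain ⟨c, hc⟩ := (correction_eq_iff_exists hVW hVBu hVx).mp hx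
    have hxc : x = -u + B⁻¹ * W * c := by
      calc x = -u + B⁻¹ * (B * (x + u)) := by
            rw [nonsing_inv_mul_cancel_left _ _ hBdet]; abel
        _ = -u + B⁻¹ * W * c := by rw [hc, Matrix.mul_assoc]
    have hMc : V * B⁻¹ * W * c = V * u := by
      rw [hxc, Matrix.mul_add, Matrix.mul_neg, neg_add_eq_zero] at hVx
      rw [hVx]; simp only [Matrix.mul_assoc]
    rw [hxc, ← nonsing_inv_mul_cancel_left _ c hMdet, hMc]
    simp only [Matrix.mul_assoc]
  · intro hx
    have hVx : V * x = 0 := by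
      rw [hx, Matrix.mul_add, Matrix.mul_neg, neg_add_eq_zero]
      simp only [← Matrix.mul_assoc]
      rw [mul_nonsing_inv _ hMdet, Matrix.one_mul]
    refine ⟨hVx, (correction_eq_iff_exists hVW hVBu hVx).mpr
      ⟨(V * B⁻¹ * W)⁻¹ * V * u, ?_⟩⟩
    rw [hx, neg_add_cancel_comm]
    simp only [← Matrix.mul_assoc]
    rw [mul_nonsing_inv _ hBdet, Matrix.one_mul]

end LeftInverse

theorem alt_correction_explicit_unique_solution_general
    {n m : ℕ}
    (A : Matrix (Fin n) (Fin n) ℂ) (lam : ℂ)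
    (hA : IsUnit (A - lam • (1 : Matrix (Fin n) (Fin n) ℂ)))
    (W : Matrix (Fin n) (Fin m) ℂ) (hW : Wᴴ * W = 1)
    (u : Matrix (Fin n) (Fin 1) ℂ)
    (r : Matrix (Fin n) (Fin 1) ℂ)
    (hr : r = (A - lam • 1) * u)
    (hWr : Wᴴ * r = 0)
    (M : Matrix (Fin m) (Fin m) ℂ)
    (hM : M = Wᴴ * (A - lam • (1 : Matrix (Fin n) (Fin n) ℂ))⁻¹ * W)
    (hMunit : IsUnit M)
    (v : Matrix (Fin n) (Fin 1) ℂ)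
    (hv : v = -u + (A - lam • (1 : Matrix (Fin n) (Fin n) ℂ))⁻¹ * W * M⁻¹ * Wᴴ * u) :
    Wᴴ * v = 0 ∧
      (1 - W * Wᴴ) * (A - lam • 1) * (1 - W * Wᴴ) * v = -r ∧
      ∀ w : Matrix (Fin n) (Fin 1) ℂ,
        Wᴴ * w = 0 →
          (1 - W * Wᴴ) * (A - lam • 1) * (1 - W * Wᴴ) * w = -r → w = v := by
  subst hr hM hv
  have hsol := fun w => correction_eq_iff (x := w) hA hW hWr hMunit
  exact ⟨((hsol _).mpr rfl).1, ((hsol _).mpr rfl).2,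
    fun w hw hcorr => (hsol w).mp ⟨hw, hcorr⟩⟩

/-- If `M = Wᴴ (A - λ̃ I)⁻¹ W` is invertible, then
`v = -u + (A - λ̃ I)⁻¹ W M⁻¹ Wᴴ u` satisfies `Wᴴ v = 0` and the alternative
correction equation, and it is the unique such solution. -/
theorem alt_correction_explicit_unique_solution
    {n m : ℕ} (hm : m ≤ n)
    (A : Matrix (Fin n) (Fin n) ℂ) (lam : ℂ)
    (hA : IsUnit (A - lam • (1 : Matrix (Fin n) (Fin n) ℂ)))
    (W : Matrix (Fin n) (Fin m) ℂ) (hW : Wᴴ * W = 1)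
    (u : Matrix (Fin n) (Fin 1) ℂ)
    (huW : ∃ c : Matrix (Fin m) (Fin 1) ℂ, u = W * c)
    (hu : uᴴ * u = 1)
    (hlam : (uᴴ * A * u) 0 0 = lam)
    (r : Matrix (Fin n) (Fin 1) ℂ)
    (hr : r = (A - lam • 1) * u)
    (hWr : Wᴴ * r = 0)
    (M : Matrix (Fin m) (Fin m) ℂ)
    (hM : M = Wᴴ * (A - lam • (1 : Matrix (Fin n) (Fin n) ℂ))⁻¹ * W)
    (hMunit : IsUnit M)
    (v : Matrix (Fin n) (Fin 1) ℂ)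
    (hv : v = -u + (A - lam • (1 : Matrix (Fin n) (Fin n) ℂ))⁻¹ * W * M⁻¹ * Wᴴ * u) :
    Wᴴ * v = 0 ∧
      (1 - W * Wᴴ) * (A - lam • 1) * (1 - W * Wᴴ) * v = -r ∧
      ∀ w : Matrix (Fin n) (Fin 1) ℂ,
        Wᴴ * w = 0 →
          (1 - W * Wᴴ) * (A - lam • 1) * (1 - W * Wᴴ) * w = -r → w = v :=
  alt_correction_explicit_unique_solution_general A lam hA W hW u r hr hWr M hM hMunit v hv
end

section
/- Suppose p^H (A - θ I)^{-1} q ≠ 0 and let s be the unique solution of the two-sided Jacobi–Davidson right correction equation (I - q p^H)(A - θ I)(I - q p^H) s = -r_q with constraint p^H s = 0. Then s does not lie in the column space of Q if and only if (A - θ I)^{-1} q ≠ Q P^H (A - θ I)^{-1} q, where Q P^H is the oblique projector onto the column space of Q along the orthogonal complement of the column space of P. -/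
/-!
Write `B = A - θ I`. Since `pᴴ s = 0`, the right projector acts trivially on `s`, and the
correction equation says that `B (s + q)` is a multiple `q μ` of `q`; hence
`s + q = μ B⁻¹ q`. Testing against `pᴴ` gives `(pᴴ B⁻¹ q) μ = pᴴ q = 1`, so `μ ≠ 0`.
As `q` lies in the column space of `Q`, so does `s` exactly when `B⁻¹ q` does, and since
`Pᴴ Q = I` the latter means that `B⁻¹ q` is fixed by the projector `Q Pᴴ`.
-/

open Matrix

namespace Matrix

variable {α : Type*} {ι κ o : Type*}

theorem exists_eq_mul_iff_eq_mul_mul [Semiring α] [Fintype ι] [Fintype κ] [DecidableEq κ]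
    {Q : Matrix ι κ α} {R : Matrix κ ι α} (hRQ : R * Q = 1) (x : Matrix ι o α) :
    (∃ c : Matrix κ o α, x = Q * c) ↔ x = Q * R * x := by
  constructor
  · rintro ⟨c, rfl⟩
    rw [Matrix.mul_assoc, ← Matrix.mul_assoc R, hRQ, Matrix.one_mul]
  · intro h
    exact ⟨R * x, by rw [← Matrix.mul_assoc, ← h]⟩

theorem exists_eq_mul_iff_of_add_eq_mul [Ring α] [Fintype κ] [Fintype o] [DecidableEq o]
    {Q : Matrix ι κ α} {s q x : Matrix ι o α} {μ : Matrix o o α}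
    (hq : ∃ c : Matrix κ o α, q = Q * c) (hsq : s + q = x * μ) (hμ : IsUnit μ) :
    (∃ c : Matrix κ o α, s = Q * c) ↔ ∃ c : Matrix κ o α, x = Q * c := by
  obtain ⟨cq, rfl⟩ := hq
  obtain ⟨u, rfl⟩ := hμ
  have hx : x = (s + Q * cq) * (↑u⁻¹ : Matrix o o α) := by
    rw [hsq, Matrix.mul_assoc, Units.mul_inv, Matrix.mul_one]
  constructor
  · rintro ⟨c, rfl⟩
    exact ⟨(c + cq) * (↑u⁻¹ : Matrix o o α), by rw [hx, ← Matrix.mul_add, Matrix.mul_assoc]⟩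
  · rintro ⟨c, rfl⟩
    exact ⟨c * (u : Matrix o o α) - cq,
      by rw [eq_sub_of_add_eq hsq, Matrix.mul_sub, Matrix.mul_assoc]⟩

theorem mul_add_eq_of_correction_equation [Ring α] [Fintype ι] [DecidableEq ι] [Fintype o]
    {B : Matrix ι ι α} {q s : Matrix ι o α} {w : Matrix o ι α} (hws : w * s = 0)
    (hs : (1 - q * w) * B * (1 - q * w) * s = -(B * q)) :
    B * (s + q) = q * (w * B * s) := by
  have hproj : (1 - q * w) * s = s := by
    rw [Matrix.sub_mul, Matrix.one_mul, Matrix.mul_assoc, hws, Matrix.mul_zero, sub_zero]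
  have hBs : B * s - q * (w * B * s) = -(B * q) := by
    rw [← hs, Matrix.mul_assoc _ (1 - q * w), hproj]
    simp only [Matrix.sub_mul, Matrix.one_mul, Matrix.mul_assoc]
  rw [Matrix.mul_add, sub_eq_iff_eq_add.mp hBs]
  abel

end Matrix

theorem two_sided_jd_right_expansion_iff_general
    {n k : ℕ} (A : Matrix (Fin n) (Fin n) ℂ)
    (Q P : Matrix (Fin n) (Fin k) ℂ)
    (hPQ : Pᴴ * Q = 1)
    (q p : Matrix (Fin n) (Fin 1) ℂ)
    (hqQ : ∃ c : Matrix (Fin k) (Fin 1) ℂ, q = Q * c)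
    (hpq : pᴴ * q = 1)
    (θ : ℂ)
    (hA : IsUnit (A - θ • (1 : Matrix (Fin n) (Fin n) ℂ)))
    (rq : Matrix (Fin n) (Fin 1) ℂ)
    (hrq : rq = (A - θ • 1) * q)
    (s : Matrix (Fin n) (Fin 1) ℂ)
    (hs₁ : pᴴ * s = 0)
    (hs₂ : (1 - q * pᴴ) * (A - θ • 1) * (1 - q * pᴴ) * s = -rq) :
    (¬ ∃ c : Matrix (Fin k) (Fin 1) ℂ, s = Q * c) ↔
      (A - θ • (1 : Matrix (Fin n) (Fin n) ℂ))⁻¹ * q ≠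
        Q * Pᴴ * ((A - θ • (1 : Matrix (Fin n) (Fin n) ℂ))⁻¹ * q) := by
  set B := A - θ • (1 : Matrix (Fin n) (Fin n) ℂ)
  have hB : IsUnit B.det := (isUnit_iff_isUnit_det B).mp hA
  rw [hrq] at hs₂
  have hsq : s + q = B⁻¹ * q * (pᴴ * B * s) := by
    rw [Matrix.mul_assoc, ← mul_add_eq_of_correction_equation hs₁ hs₂,
      nonsing_inv_mul_cancel_left B (s + q) hB]
  have hμ : pᴴ * B⁻¹ * q * (pᴴ * B * s) = 1 := by
    rw [← hpq, ← zero_add (pᴴ * q), ← hs₁, ← Matrix.mul_add, hsq]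
    simp only [Matrix.mul_assoc]
  have hμ_unit : IsUnit (pᴴ * B * s) :=
    (isUnit_iff_isUnit_det _).mpr (isUnit_det_of_left_inverse hμ)
  rw [not_iff_not, exists_eq_mul_iff_of_add_eq_mul hqQ hsq hμ_unit,
    exists_eq_mul_iff_eq_mul_mul hPQ]

/-- If `pᴴ (A - θ I)⁻¹ q ≠ 0` and `s` is the unique solution of the two-sided
Jacobi–Davidson right correction equation, then `s` is not in the column space
of `Q` iff `(A - θ I)⁻¹ q ≠ Q Pᴴ (A - θ I)⁻¹ q`. -/
theorem two_sided_jd_right_expansion_iff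
    {n k : ℕ} (A : Matrix (Fin n) (Fin n) ℂ)
    (Q P : Matrix (Fin n) (Fin k) ℂ)
    (hQP : Qᴴ * P = 1) (hPQ : Pᴴ * Q = 1)
    (q p : Matrix (Fin n) (Fin 1) ℂ)
    (hqQ : ∃ c : Matrix (Fin k) (Fin 1) ℂ, q = Q * c)
    (hpP : ∃ c : Matrix (Fin k) (Fin 1) ℂ, p = P * c)
    (hpq : pᴴ * q = 1)
    (θ : ℂ) (hθ : θ = (pᴴ * A * q) 0 0)
    (hA : IsUnit (A - θ • (1 : Matrix (Fin n) (Fin n) ℂ)))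
    (rq : Matrix (Fin n) (Fin 1) ℂ)
    (hrq : rq = (A - θ • 1) * q)
    (hα : (pᴴ * (A - θ • (1 : Matrix (Fin n) (Fin n) ℂ))⁻¹ * q) 0 0 ≠ 0)
    (s : Matrix (Fin n) (Fin 1) ℂ)
    (hs₁ : pᴴ * s = 0)
    (hs₂ : (1 - q * pᴴ) * (A - θ • 1) * (1 - q * pᴴ) * s = -rq) :
    (¬ ∃ c : Matrix (Fin k) (Fin 1) ℂ, s = Q * c) ↔
      (A - θ • (1 : Matrix (Fin n) (Fin n) ℂ))⁻¹ * q ≠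
        Q * Pᴴ * ((A - θ • (1 : Matrix (Fin n) (Fin n) ℂ))⁻¹ * q) :=
  two_sided_jd_right_expansion_iff_general A Q P hPQ q p hqQ hpq θ hA rq hrq s hs₁ hs₂
end

section
/- Suppose p^H (A - θ I)^{-1} q ≠ 0 and let t be the unique solution of the two-sided Jacobi–Davidson left correction equation (I - p q^H)(A^H - θ̄ I)(I - p q^H) t = -r_p with constraint q^H t = 0. Then t does not lie in the column space of P if and only if (A^H - θ̄ I)^{-1} p ≠ P Q^H (A^H - θ̄ I)^{-1} p, where P Q^H is the oblique projector onto the column space of P along the orthogonal complement of the column space of Q. -/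
/-!
Write `B = Aᴴ - θ̄ I`. Since `qᴴ t = 0`, the correction equation says that `B t + B p` is a
multiple `ε p` of `p`, so `t = ε B⁻¹ p - p`; and `ε ≠ 0`, because otherwise `t = -p` would
contradict `qᴴ t = 0 ≠ qᴴ p`. As `p` lies in the column space of `P`, so does `t` iff `B⁻¹ p`
does, and since `Qᴴ P = I` a vector `v` lies in the column space of `P` iff `P Qᴴ v = v`.
-/

open Matrix

namespace Matrix

variable {m o l k R : Type*} [Fintype o] [Fintype k]

theorem mul_eq_smul_of_unique [CommSemiring R] [Unique o] (p : Matrix m o R)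
    (M : Matrix o o R) : p * M = M default default • p := by
  ext i j
  simp [mul_apply, Unique.eq_default j, mul_comm]

theorem exists_eq_mul_iff_of_mul_eq_one [Semiring R] {P : Matrix m k R} {X : Matrix k m R}
    [Fintype m] [DecidableEq k] (hXP : X * P = 1) (v : Matrix m l R) :
    (∃ c : Matrix k l R, v = P * c) ↔ v = P * X * v := by
  constructor
  · rintro ⟨c, rfl⟩
    rw [Matrix.mul_assoc, ← Matrix.mul_assoc X, hXP, Matrix.one_mul]
  · intro hv
    exact ⟨X * v, by rwa [← Matrix.mul_assoc]⟩

theorem exists_smul_sub_eq_mul_iff [Field R] {P : Matrix m k R} {p w : Matrix m l R}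
    (hp : ∃ c : Matrix k l R, p = P * c) {ε : R} (hε : ε ≠ 0) :
    (∃ c : Matrix k l R, ε • w - p = P * c) ↔ ∃ c : Matrix k l R, w = P * c := by
  obtain ⟨cp, rfl⟩ := hp
  constructor
  · rintro ⟨c, hc⟩
    refine ⟨ε⁻¹ • (c + cp), ?_⟩
    rw [Matrix.mul_smul, Matrix.mul_add, ← hc, sub_add_cancel, smul_smul,
      inv_mul_cancel₀ hε, one_smul]
  · rintro ⟨c, rfl⟩
    exact ⟨ε • c - cp, by rw [Matrix.mul_sub, Matrix.mul_smul]⟩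

end Matrix

section CorrectionEquation

variable {m : Type*} [Fintype m] [DecidableEq m] {K : Type*} [Field K]

theorem one_sub_mul_mul_eq (p x : Matrix m (Fin 1) K) (u : Matrix (Fin 1) m K) :
    (1 - p * u) * x = x - (u * x) 0 0 • p := by
  rw [Matrix.sub_mul, Matrix.one_mul, Matrix.mul_assoc, mul_eq_smul_of_unique]
  rfl

theorem exists_eq_smul_inv_mul_sub_of_correction_eq {B : Matrix m m K} (hB : IsUnit B.det)
    {p t : Matrix m (Fin 1) K} {u : Matrix (Fin 1) m K} (hup : u * p = 1) (hut : u * t = 0)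
    (ht : (1 - p * u) * B * (1 - p * u) * t = -(B * p)) :
    ∃ ε : K, ε ≠ 0 ∧ t = ε • (B⁻¹ * p) - p := by
  have hproj_t : (1 - p * u) * t = t := by
    rw [one_sub_mul_mul_eq, hut]
    simp
  rw [Matrix.mul_assoc _ (1 - p * u), hproj_t, Matrix.mul_assoc, one_sub_mul_mul_eq] at ht
  set ε := (u * (B * t)) 0 0
  have hBt : B * t = ε • p - B * p := by
    rw [sub_eq_iff_eq_add.mp ht]
    abel
  have ht_eq : t = ε • (B⁻¹ * p) - p := by
    rw [← Matrix.nonsing_inv_mul_cancel_left B t hB, hBt, Matrix.mul_sub, Matrix.mul_smul,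
      Matrix.nonsing_inv_mul_cancel_left B p hB]
  refine ⟨ε, fun hε => ?_, ht_eq⟩
  have : u * t = -(u * p) := by
    rw [ht_eq, hε, zero_smul, zero_sub, Matrix.mul_neg]
  rw [hut, hup] at this
  simpa using congrFun (congrFun this 0) 0

end CorrectionEquation

theorem two_sided_jd_left_expansion_iff_general
    {n k : ℕ} (A : Matrix (Fin n) (Fin n) ℂ)
    (Q P : Matrix (Fin n) (Fin k) ℂ)
    (hQP : Qᴴ * P = 1)
    (q p : Matrix (Fin n) (Fin 1) ℂ)
    (hpP : ∃ c : Matrix (Fin k) (Fin 1) ℂ, p = P * c)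
    (hpq : pᴴ * q = 1)
    (θ : ℂ)
    (hA : IsUnit (A - θ • (1 : Matrix (Fin n) (Fin n) ℂ)))
    (rp : Matrix (Fin n) (Fin 1) ℂ)
    (hrp : rp = (Aᴴ - (starRingEnd ℂ θ) • 1) * p)
    (t : Matrix (Fin n) (Fin 1) ℂ)
    (ht₁ : qᴴ * t = 0)
    (ht₂ : (1 - p * qᴴ) * (Aᴴ - (starRingEnd ℂ θ) • 1) * (1 - p * qᴴ) * t = -rp) :
    (¬ ∃ c : Matrix (Fin k) (Fin 1) ℂ, t = P * c) ↔
      (Aᴴ - (starRingEnd ℂ θ) • (1 : Matrix (Fin n) (Fin n) ℂ))⁻¹ * p ≠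
        P * Qᴴ * ((Aᴴ - (starRingEnd ℂ θ) • (1 : Matrix (Fin n) (Fin n) ℂ))⁻¹ * p) := by
  set B : Matrix (Fin n) (Fin n) ℂ := Aᴴ - (starRingEnd ℂ θ) • 1
  have hB : IsUnit B.det := by
    have hBct : B = (A - θ • 1)ᴴ := by simp [B, conjTranspose_sub, conjTranspose_smul]
    rw [hBct, det_conjTranspose]
    exact ((isUnit_iff_isUnit_det _).mp hA).star
  have hqp : qᴴ * p = 1 := by simpa [conjTranspose_mul] using congrArg conjTranspose hpq
  obtain ⟨ε, hε, rfl⟩ := exists_eq_smul_inv_mul_sub_of_correction_eq hB hqp ht₁ (hrp ▸ ht₂)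
  rw [ne_eq, not_iff_not]
  exact (exists_smul_sub_eq_mul_iff hpP hε).trans (exists_eq_mul_iff_of_mul_eq_one hQP _)

/-- If `pᴴ (A - θ I)⁻¹ q ≠ 0` and `t` is the unique solution of the two-sided
Jacobi–Davidson left correction equation, then `t` is not in the column space
of `P` iff `(Aᴴ - θ̄ I)⁻¹ p ≠ P Qᴴ (Aᴴ - θ̄ I)⁻¹ p`. -/
theorem two_sided_jd_left_expansion_iff
    {n k : ℕ} (A : Matrix (Fin n) (Fin n) ℂ)
    (Q P : Matrix (Fin n) (Fin k) ℂ)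
    (hQP : Qᴴ * P = 1) (hPQ : Pᴴ * Q = 1)
    (q p : Matrix (Fin n) (Fin 1) ℂ)
    (hqQ : ∃ c : Matrix (Fin k) (Fin 1) ℂ, q = Q * c)
    (hpP : ∃ c : Matrix (Fin k) (Fin 1) ℂ, p = P * c)
    (hpq : pᴴ * q = 1)
    (θ : ℂ) (hθ : θ = (pᴴ * A * q) 0 0)
    (hA : IsUnit (A - θ • (1 : Matrix (Fin n) (Fin n) ℂ)))
    (rp : Matrix (Fin n) (Fin 1) ℂ)
    (hrp : rp = (Aᴴ - (starRingEnd ℂ θ) • 1) * p)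
    (hα : (pᴴ * (A - θ • (1 : Matrix (Fin n) (Fin n) ℂ))⁻¹ * q) 0 0 ≠ 0)
    (t : Matrix (Fin n) (Fin 1) ℂ)
    (ht₁ : qᴴ * t = 0)
    (ht₂ : (1 - p * qᴴ) * (Aᴴ - (starRingEnd ℂ θ) • 1) * (1 - p * qᴴ) * t = -rp) :
    (¬ ∃ c : Matrix (Fin k) (Fin 1) ℂ, t = P * c) ↔
      (Aᴴ - (starRingEnd ℂ θ) • (1 : Matrix (Fin n) (Fin n) ℂ))⁻¹ * p ≠
        P * Qᴴ * ((Aᴴ - (starRingEnd ℂ θ) • (1 : Matrix (Fin n) (Fin n) ℂ))⁻¹ * p) :=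
  two_sided_jd_left_expansion_iff_general A Q P hQP q p hpP hpq θ hA rp hrp t ht₁ ht₂
end
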